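/- arXiv:1704.01288 — 11 statements merged into one kernel-verified Lean document; each statement's English description precedes it below -/
import Mathlib

section
/- For nonnegative real numbers x_1, ..., x_n and an integer m with 0 ≤ m < n, the (n-m)-th elementary symmetric polynomial satisfies Σ_{1 ≤ i_1 < ... < i_{n-m} ≤ n} x_{i_1} ··· x_{i_{n-m}} ≥ (n! / ((n-m)! m!)) · (x_1 x_2 ··· x_n)^((n-m)/n). -/
open Finset

/-!
AM-GM applied to the `C(n, k)` monomials of the elementary symmetric polynomial `e_k`: every
`xᵢ` occurs in exactly `C(n - 1, k - 1)` of them, so their product is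
`(x₁ ⋯ xₙ) ^ C(n - 1, k - 1)`, and `C(n - 1, k - 1) / C(n, k) = k / n`.
-/

namespace Finset

variable {α : Type*}

theorem card_filter_mem_powersetCard [DecidableEq α] {s : Finset α} {i : α} (hi : i ∈ s)
    (k : ℕ) : #{t ∈ s.powersetCard (k + 1) | i ∈ t} = (#s - 1).choose k := by
  simpa only [singleton_subset_iff, card_singleton, Nat.add_sub_cancel] using
    card_filter_powersetCard_subset {i} s (k + 1) (singleton_subset_iff.2 hi) (by simp)

theorem prod_powersetCard_prod {M : Type*} [CommMonoid M] (s : Finset α) (k : ℕ) (f : α → M) :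
    ∏ t ∈ s.powersetCard (k + 1), ∏ i ∈ t, f i = (∏ i ∈ s, f i) ^ (#s - 1).choose k := by
  classical
  rw [prod_comm' (t' := s) (s' := fun i ↦ {t ∈ s.powersetCard (k + 1) | i ∈ t}), ← prod_pow]
  · exact prod_congr rfl fun i hi ↦ by rw [prod_const, card_filter_mem_powersetCard hi]
  · intro t i
    simp only [mem_filter, mem_powersetCard]
    exact ⟨fun ⟨⟨hts, hk⟩, hit⟩ ↦ ⟨⟨⟨hts, hk⟩, hit⟩, hts hit⟩, fun ⟨h, _⟩ ↦ ⟨h.1, h.2⟩⟩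

end Finset

theorem Real.prod_rpow_inv_card_le_sum_div_card {ι : Type*} {s : Finset ι} (hs : s.Nonempty)
    (z : ι → ℝ) (hz : ∀ i ∈ s, 0 ≤ z i) :
    (∏ i ∈ s, z i) ^ ((#s : ℝ)⁻¹) ≤ (∑ i ∈ s, z i) / #s := by
  simpa using Real.geom_mean_le_arith_mean s (fun _ ↦ 1) z (fun _ _ ↦ zero_le_one)
    (by simpa using hs) hz

theorem Nat.cast_choose_pred_div_cast_choose {n k : ℕ} (hk : k < n) :
    ((n - 1).choose k : ℝ) / n.choose (k + 1) = (k + 1) / n := by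
  obtain ⟨n, rfl⟩ := Nat.exists_eq_add_of_lt (Nat.zero_lt_of_lt hk)
  have key : ((n + 1 : ℕ) : ℝ) * n.choose k = (n + 1).choose (k + 1) * (k + 1) := by
    exact_mod_cast Nat.add_one_mul_choose_eq n k
  have hpos : (0 : ℝ) < (n + 1).choose (k + 1) := by
    exact_mod_cast Nat.choose_pos (by omega)
  simp only [zero_add, Nat.add_sub_cancel] at key ⊢
  field_simp
  linarith

theorem Finset.choose_mul_prod_rpow_le_sum_powersetCard {ι : Type*} (s : Finset ι) (x : ι → ℝ)
    (hx : ∀ i ∈ s, 0 ≤ x i) (k : ℕ) :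
    ((#s).choose k : ℝ) * (∏ i ∈ s, x i) ^ ((k : ℝ) / #s) ≤
      ∑ t ∈ s.powersetCard k, ∏ i ∈ t, x i := by
  obtain _ | k := k
  · simp
  have hterm : ∀ t ∈ s.powersetCard (k + 1), 0 ≤ ∏ i ∈ t, x i := fun t ht ↦
    prod_nonneg fun i hi ↦ hx i ((mem_powersetCard.1 ht).1 hi)
  obtain hlt | hle := Nat.lt_or_ge #s (k + 1)
  · rw [Nat.choose_eq_zero_of_lt hlt, Nat.cast_zero, zero_mul]
    exact sum_nonneg hterm
  set S := s.powersetCard (k + 1)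
  have hS : (#S : ℝ) = (#s).choose (k + 1) := by rw [card_powersetCard]
  have hSpos : (0 : ℝ) < #S := by rw [hS]; exact_mod_cast Nat.choose_pos hle
  have hP : 0 ≤ ∏ i ∈ s, x i := prod_nonneg hx
  have hgm : (∏ i ∈ s, x i) ^ (((k + 1 : ℕ) : ℝ) / #s) =
      (∏ t ∈ S, ∏ i ∈ t, x i) ^ (#S : ℝ)⁻¹ := by
    rw [prod_powersetCard_prod, ← Real.rpow_natCast, ← Real.rpow_mul hP, hS, ← div_eq_mul_inv,
      Nat.cast_choose_pred_div_cast_choose hle, Nat.cast_add_one]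
  calc ((#s).choose (k + 1) : ℝ) * (∏ i ∈ s, x i) ^ (((k + 1 : ℕ) : ℝ) / #s)
      = #S * (∏ t ∈ S, ∏ i ∈ t, x i) ^ (#S : ℝ)⁻¹ := by rw [hgm, hS]
    _ ≤ #S * ((∑ t ∈ S, ∏ i ∈ t, x i) / #S) := by
      gcongr
      exact Real.prod_rpow_inv_card_le_sum_div_card (card_pos.1 (mod_cast hSpos)) _ hterm
    _ = ∑ t ∈ S, ∏ i ∈ t, x i := mul_div_cancel₀ _ hSpos.ne'

theorem stmt1_general (n m : ℕ) (hm : m < n) (x : Fin n → ℝ) (hx : ∀ i, 0 ≤ x i) :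
    ∑ s ∈ Finset.powersetCard (n - m) (Finset.univ : Finset (Fin n)), ∏ i ∈ s, x i ≥
      ((n.factorial : ℝ) / (((n - m).factorial * m.factorial : ℕ) : ℝ)) *
        (∏ i, x i) ^ (((n : ℝ) - m) / n) := by
  have hcoef : (n.factorial : ℝ) / (((n - m).factorial * m.factorial : ℕ) : ℝ) =
      n.choose (n - m) := by
    rw [Nat.cast_choose ℝ (Nat.sub_le n m), Nat.sub_sub_self hm.le, Nat.cast_mul]
  have hexp : ((n : ℝ) - m) / n = ((n - m : ℕ) : ℝ) / n := by rw [Nat.cast_sub hm.le]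
  rw [ge_iff_le, hcoef, hexp]
  simpa using choose_mul_prod_rpow_le_sum_powersetCard univ x (fun i _ ↦ hx i) (n - m)

theorem stmt1 (n m : ℕ) (hn : 0 < n) (hm : m < n) (x : Fin n → ℝ) (hx : ∀ i, 0 ≤ x i) :
    ∑ s ∈ Finset.powersetCard (n - m) (Finset.univ : Finset (Fin n)), ∏ i ∈ s, x i ≥
      ((n.factorial : ℝ) / (((n - m).factorial * m.factorial : ℕ) : ℝ)) *
        (∏ i, x i) ^ (((n : ℝ) - m) / n) :=
  stmt1_general n m hm x hx
end

section
/- Let a > 0 and let x_1, ..., x_n be positive real numbers. Define F(x_1,...,x_n) = Σ_{m=0}^{n} a^(m-1)(a - m) e_{n-m}(x_1,...,x_n), where e_k denotes the k-th elementary symmetric polynomial (with e_0 = 1). Then F(x_1,...,x_n) ≥ 0 if and only if Σ_{i=1}^{n} 1/(a + x_i) ≤ 1. -/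
open Finset

lemma zpow_aux (a : ℝ) (ha' : a ≠ 0) (m : ℕ) :
    a ^ ((m : ℤ) - 1) * (a - (m : ℝ))
        = a ^ ((m : ℕ) : ℤ) - (m : ℝ) * a ^ ((m : ℤ) - 1) := by
  rcases m with _ | k
  · simp [zpow_neg_one, inv_mul_cancel₀ ha']
  · have h1 : ((k + 1 : ℕ) : ℤ) - 1 = ((k : ℕ) : ℤ) := by push_cast; ring
    rw [h1, zpow_natCast, zpow_natCast]
    push_cast
    ring

theorem stmt2 (n : ℕ) (hn : 0 < n) (a : ℝ) (ha : 0 < a) (x : Fin n → ℝ)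
    (hx : ∀ i, 0 < x i) :
    0 ≤ ∑ m ∈ Finset.range (n + 1),
        a ^ ((m : ℤ) - 1) * (a - m) *
          ∑ s ∈ Finset.powersetCard (n - m) (Finset.univ : Finset (Fin n)), ∏ i ∈ s, x i ↔
      ∑ i, 1 / (a + x i) ≤ 1 := by
  have ha' : a ≠ 0 := ne_of_gt ha
  have hax : ∀ i, 0 < a + x i := fun i => add_pos ha (hx i)
  have hPpos : 0 < ∏ i, (a + x i) := prod_pos fun i _ => hax i
  -- step 1: reindex the main sum over subsets
  have step1 : ∑ m ∈ Finset.range (n + 1),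
        a ^ ((m : ℤ) - 1) * (a - m) *
          ∑ s ∈ Finset.powersetCard (n - m) (Finset.univ : Finset (Fin n)), ∏ i ∈ s, x i
      = ∑ t ∈ (univ : Finset (Fin n)).powerset,
          (a ^ ((n - t.card : ℕ) : ℤ) - (n - t.card : ℕ) * a ^ (((n - t.card : ℕ) : ℤ) - 1))
            * ∏ i ∈ t, x i := by
    rw [← Finset.sum_range_reflect]
    rw [Finset.sum_powerset]
    rw [Finset.card_univ, Fintype.card_fin]
    refine Finset.sum_congr rfl fun j hj => ?_
    rw [Finset.mem_range] at hj
    have hj' : j ≤ n := Nat.lt_succ_iff.mp hj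
    have h1 : n + 1 - 1 - j = n - j := by omega
    have h2 : n - (n - j) = j := by omega
    rw [h1, h2, Finset.mul_sum]
    refine Finset.sum_congr rfl fun t ht => ?_
    rw [Finset.mem_powersetCard] at ht
    rw [ht.2]
    have h3 : n - j ≠ 0 → True := fun _ => trivial
    rw [zpow_aux a ha' (n-j)]
  have step2 : ∑ t ∈ (univ : Finset (Fin n)).powerset,
        (a ^ ((n - t.card : ℕ) : ℤ) - (n - t.card : ℕ) * a ^ (((n - t.card : ℕ) : ℤ) - 1))
          * ∏ i ∈ t, x i
      = (∏ i, (a + x i)) - ∑ i, ∏ j ∈ univ.erase i, (a + x j) := by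
    have hPexp : (∏ i, (a + x i)) = ∑ t ∈ (univ : Finset (Fin n)).powerset,
        a ^ ((n - t.card : ℕ) : ℤ) * ∏ i ∈ t, x i := by
      rw [show (∏ i, (a + x i)) = ∏ i, (x i + a) from
        Finset.prod_congr rfl fun j _ => add_comm _ _, Finset.prod_add]
      refine Finset.sum_congr rfl fun t ht => ?_
      rw [Finset.mem_powerset] at ht
      rw [Finset.prod_const, Finset.card_sdiff_of_subset ht, card_univ, Fintype.card_fin,
        zpow_natCast]
      ring
    have hDexp : ∑ i, ∏ j ∈ univ.erase i, (a + x j)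
        = ∑ t ∈ (univ : Finset (Fin n)).powerset,
            ((n - t.card : ℕ) : ℝ) * a ^ (((n - t.card : ℕ) : ℤ) - 1) * ∏ i ∈ t, x i := by
      have h1 : ∀ i : Fin n, ∏ j ∈ univ.erase i, (a + x j)
          = ∑ t ∈ (univ.erase i).powerset, (∏ j ∈ t, x j) * a ^ ((n - 1) - t.card) := by
        intro i
        rw [show (∏ j ∈ univ.erase i, (a + x j)) = ∏ j ∈ univ.erase i, (x j + a) from
          Finset.prod_congr rfl fun j _ => add_comm _ _, Finset.prod_add]
        refine Finset.sum_congr rfl fun t ht => ?_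
        rw [Finset.mem_powerset] at ht
        rw [Finset.prod_const, Finset.card_sdiff_of_subset ht, Finset.card_erase_of_mem (mem_univ i),
          card_univ, Fintype.card_fin]
      simp only [h1]
      rw [Finset.sum_comm' (s := (univ : Finset (Fin n)))
        (t := fun i => (univ.erase i).powerset)
        (t' := (univ : Finset (Fin n)).powerset) (s' := fun t => univ \ t)
        (by
          intro i t
          simp only [Finset.mem_powerset, Finset.subset_erase, Finset.mem_sdiff,
            Finset.mem_univ, true_and]
          tauto)]
      refine Finset.sum_congr rfl fun t ht => ?_
      rw [Finset.mem_powerset] at ht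
      rw [Finset.sum_const, Finset.card_sdiff_of_subset ht, card_univ, Fintype.card_fin, nsmul_eq_mul]
      have hc : t.card ≤ n := by
        simpa using Finset.card_le_card ht
      rcases eq_or_lt_of_le hc with h | h
      · simp [h]
      · have he : ((n - t.card : ℕ) : ℤ) - 1 = ((n - 1 - t.card : ℕ) : ℤ) := by omega
        rw [he, zpow_natCast]
        ring
    rw [hPexp, hDexp, ← Finset.sum_sub_distrib]
    refine Finset.sum_congr rfl fun t _ => ?_
    ring
  rw [step1, step2]
  have hD : ∑ i, ∏ j ∈ univ.erase i, (a + x j)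
      = (∏ i, (a + x i)) * ∑ i, 1 / (a + x i) := by
    rw [Finset.mul_sum]
    refine Finset.sum_congr rfl fun i _ => ?_
    rw [← Finset.mul_prod_erase univ _ (mem_univ i), mul_one_div, mul_comm,
      mul_div_assoc, div_self (ne_of_gt (hax i)), mul_one]
  rw [hD, sub_nonneg, mul_le_iff_le_one_right hPpos]
end

section
/- Let A be a positive invertible operator on a complex Hilbert space and let ξ₀ be a unit vector with associated rank-one projection P = ξ₀ξ₀*. Then A ≥ P if and only if ⟨A⁻¹ξ₀, ξ₀⟩ ≤ 1. -/
open scoped InnerProductSpace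

/-!
Put `b = A⁻¹ ξ₀`. Since `⟪ξ₀, x⟫ = ⟪b, A x⟫`, the Cauchy–Schwarz inequality for the positive
semidefinite form `(x, y) ↦ ⟪x, A y⟫` gives `‖⟪ξ₀, x⟫‖² ≤ re ⟪b, ξ₀⟫ · re ⟪A x, x⟫`, so
`re ⟪b, ξ₀⟫ ≤ 1` implies `‖⟪ξ₀, x⟫‖² ≤ re ⟪A x, x⟫`, i.e. `A ≥ ξ₀ξ₀*`. Conversely, testing
`A ≥ ξ₀ξ₀*` at `x = b` gives `‖z‖² ≤ re z` for `z = ⟪ξ₀, b⟫`, which forces `re z ≤ 1`.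
-/

open RCLike InnerProductSpace

namespace ContinuousLinearMap

variable {𝕜 E : Type*} [RCLike 𝕜] [NormedAddCommGroup E] [InnerProductSpace 𝕜 E]

local notation "⟪" x ", " y "⟫" => inner 𝕜 x y

theorem IsPositive.norm_inner_mul_norm_inner_le {T : E →L[𝕜] E} (hT : T.IsPositive) (x y : E) :
    ‖⟪x, T y⟫‖ * ‖⟪y, T x⟫‖ ≤ re ⟪x, T x⟫ * re ⟪y, T y⟫ :=
  let c : PreInnerProductSpace.Core 𝕜 E :=
    { inner x y := ⟪x, T y⟫
      conj_inner_symm x y := by rw [inner_conj_symm, hT.inner_left_eq_inner_right]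
      re_inner_nonneg := hT.re_inner_nonneg_right
      add_left x y z := inner_add_left x y (T z)
      smul_left x y r := inner_smul_left x (T y) r }
  @InnerProductSpace.Core.inner_mul_inner_self_le 𝕜 E _ _ _ c x y

theorem isPositive_sub_rankOne_self_iff {T : E →L[𝕜] E} (hT : T.IsSymmetric) (v : E) :
    (T - rankOne 𝕜 v v).IsPositive ↔ ∀ x, ‖⟪v, x⟫‖ ^ 2 ≤ re ⟪T x, x⟫ := by
  have hre (x : E) : re ⟪(T - rankOne 𝕜 v v) x, x⟫ = re ⟪T x, x⟫ - ‖⟪v, x⟫‖ ^ 2 := by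
    rw [sub_apply, inner_sub_left, rankOne_apply, inner_smul_left, RCLike.conj_mul, map_sub,
      ← ofReal_pow, ofReal_re]
  simp only [isPositive_def, reApplyInnerSelf_apply, hre, sub_nonneg]
  exact and_iff_right (hT.sub (isSymmetric_rankOne_self v))

theorem IsPositive.norm_inner_sq_le_re_inner_mul {T : E →L[𝕜] E} (hT : T.IsPositive) {b v : E}
    (hb : T b = v) (x : E) : ‖⟪v, x⟫‖ ^ 2 ≤ re ⟪b, v⟫ * re ⟪T x, x⟫ := by
  have h := hT.norm_inner_mul_norm_inner_le b x
  rwa [hb, ← hT.inner_left_eq_inner_right, hb, norm_inner_symm x v, ← sq, inner_re_symm x] at h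

end ContinuousLinearMap

theorem RCLike.re_le_one_of_norm_sq_le_re {𝕜 : Type*} [RCLike 𝕜] {z : 𝕜} (h : ‖z‖ ^ 2 ≤ re z) :
    re z ≤ 1 := by
  nlinarith [re_le_norm z, norm_nonneg z]

theorem stmt3_general (H : Type*) [NormedAddCommGroup H] [InnerProductSpace ℂ H]
    (A B : H →L[ℂ] H) (hA : A.IsPositive)
    (hAB : A.comp B = ContinuousLinearMap.id ℂ H)
    (ξ₀ : H) :
    (A - (innerSL ℂ ξ₀).smulRight ξ₀).IsPositive ↔ (⟪B ξ₀, ξ₀⟫_ℂ).re ≤ 1 := by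
  have hb : A (B ξ₀) = ξ₀ := DFunLike.congr_fun hAB ξ₀
  have key := hA.norm_inner_sq_le_re_inner_mul hb
  change (A - rankOne ℂ ξ₀ ξ₀).IsPositive ↔ re ⟪B ξ₀, ξ₀⟫_ℂ ≤ 1
  rw [ContinuousLinearMap.isPositive_sub_rankOne_self_iff hA.isSymmetric]
  constructor
  · intro h
    rw [inner_re_symm]
    have hξ := h (B ξ₀)
    rw [hb] at hξ
    exact RCLike.re_le_one_of_norm_sq_le_re hξ
  · intro h x
    exact (key x).trans (mul_le_of_le_one_left (hA.re_inner_nonneg_left x) h)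

theorem stmt3 (H : Type*) [NormedAddCommGroup H] [InnerProductSpace ℂ H] [CompleteSpace H]
    (A B : H →L[ℂ] H) (hA : A.IsPositive)
    (hAB : A.comp B = ContinuousLinearMap.id ℂ H)
    (hBA : B.comp A = ContinuousLinearMap.id ℂ H)
    (ξ₀ : H) (hξ₀ : ‖ξ₀‖ = 1) :
    (A - (innerSL ℂ ξ₀).smulRight ξ₀).IsPositive ↔ (⟪B ξ₀, ξ₀⟫_ℂ).re ≤ 1 :=
  stmt3_general H A B hA hAB ξ₀
end

section
/- Let a, c_1, ..., c_n be positive reals and σ a permutation of {1,...,n}. If a ≥ max(n - 1, n - (c_1 c_2 ··· c_n)^(1/n)), then for all positive reals α_1, ..., α_n, Σ_{i=1}^{n} α_i / (a α_i + c_i α_{σ(i)}) ≤ 1. -/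
/-!
With `t i = c i * α (σ i) / α i` the summands become `1 / (a + t i)`, and `∏ t = ∏ c` because `σ`
only permutes the `α`'s. Clearing denominators, the claim is `P(a) - P'(a) ≥ 0` for
`P = ∏ (X + t i)`; in terms of the elementary symmetric functions `e_k(t)` this difference is
`∑ₖ (a^(n-k) - (n-k) a^(n-k-1)) e_k(t)`. For `k ≥ 1` the weights are nonnegative because
`a ≥ n - 1`, and AM-GM over the `k`-subsets gives `e_k(t) ≥ (n choose k) g^k` with `g` the geometric
mean of the `t i`. So the difference is at least the same expression with every `t i` replaced
by `g`, which is `(a + g)^(n-1) (a + g - n) ≥ 0`.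
-/

open Finset

theorem Finset.prod_powersetCard_prod_s4 {ι M : Type*} [CommMonoid M] (s : Finset ι) (f : ι → M)
    {k : ℕ} (hk : 1 ≤ k) :
    ∏ S ∈ s.powersetCard k, ∏ i ∈ S, f i = (∏ i ∈ s, f i) ^ (#s - 1).choose (k - 1) := by
  classical
  rw [prod_comm' (t' := s) (s' := fun i ↦ {S ∈ s.powersetCard k | {i} ⊆ S}), ← prod_pow]
  · refine prod_congr rfl fun i hi ↦ ?_
    rw [prod_const, card_filter_powersetCard_subset _ _ _ (by simpa) (by simpa), card_singleton]
  · intro S i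
    simp only [mem_filter, mem_powersetCard, singleton_subset_iff]
    exact ⟨fun ⟨⟨hS, hk⟩, hi⟩ ↦ ⟨⟨⟨hS, hk⟩, hi⟩, hS hi⟩, fun ⟨⟨⟨hS, hk⟩, hi⟩, _⟩ ↦ ⟨⟨hS, hk⟩, hi⟩⟩

theorem Real.card_mul_le_sum_of_pow_card_le_prod {ι : Type*} {s : Finset ι} {z : ι → ℝ} {x : ℝ}
    (hz : ∀ i ∈ s, 0 ≤ z i) (hx : 0 ≤ x) (h : x ^ #s ≤ ∏ i ∈ s, z i) :
    #s * x ≤ ∑ i ∈ s, z i := by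
  rcases s.eq_empty_or_nonempty with rfl | hs
  · simp
  have hcard : (0 : ℝ) < #s := by exact_mod_cast hs.card_pos
  have amgm := Real.geom_mean_le_arith_mean_weighted s (fun _ ↦ (#s : ℝ)⁻¹) z
    (fun _ _ ↦ by positivity) (by simp [hcard.ne']) hz
  rw [Real.finsetProd_rpow s z hz, ← mul_sum] at amgm
  have hroot : x ≤ (∏ i ∈ s, z i) ^ (#s : ℝ)⁻¹ :=
    calc x = (x ^ #s) ^ (#s : ℝ)⁻¹ := (Real.pow_rpow_inv_natCast hx hs.card_pos.ne').symm
      _ ≤ _ := by gcongr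
  calc #s * x ≤ #s * ((#s : ℝ)⁻¹ * ∑ i ∈ s, z i) := by gcongr; exact hroot.trans amgm
    _ = ∑ i ∈ s, z i := by field_simp

theorem choose_mul_pow_le_sum_powersetCard_prod {ι : Type*} {s : Finset ι} {t : ι → ℝ} {g : ℝ}
    (ht : ∀ i ∈ s, 0 ≤ t i) (hg : 0 ≤ g) (hprod : g ^ #s ≤ ∏ i ∈ s, t i) (k : ℕ) :
    (#s).choose k * g ^ k ≤ ∑ S ∈ s.powersetCard k, ∏ i ∈ S, t i := by
  rcases Nat.eq_zero_or_pos k with rfl | hk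
  · simp
  have hchoose : #s * (#s - 1).choose (k - 1) = (#s).choose k * k := by
    obtain ⟨j, rfl⟩ : ∃ j, k = j + 1 := ⟨k - 1, by omega⟩
    rcases (#s).eq_zero_or_pos with h0 | hpos
    · simp [h0]
    · obtain ⟨m, hm⟩ : ∃ m, #s = m + 1 := ⟨#s - 1, by omega⟩
      simpa [hm] using Nat.add_one_mul_choose_eq m j
  have := Real.card_mul_le_sum_of_pow_card_le_prod (s := s.powersetCard k)
    (z := fun S ↦ ∏ i ∈ S, t i) (x := g ^ k)
    (fun S hS ↦ prod_nonneg fun i hi ↦ ht i ((mem_powersetCard.1 hS).1 hi)) (by positivity) ?_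
  · simpa using this
  rw [prod_powersetCard_prod_s4 s t hk, card_powersetCard, ← pow_mul, mul_comm k, ← hchoose, pow_mul]
  gcongr

open Polynomial in
theorem prod_add_sub_sum_prod_erase {ι R : Type*} [CommRing R] [DecidableEq ι] (s : Finset ι)
    (t : ι → R) (a : R) :
    ∏ i ∈ s, (a + t i) - ∑ i ∈ s, ∏ j ∈ s.erase i, (a + t j) =
      ∑ k ∈ range (#s + 1), (a ^ (#s - k) - (#s - k : ℕ) * a ^ (#s - k - 1)) *
        ∑ S ∈ s.powersetCard k, ∏ i ∈ S, t i := by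
  set P : R[X] := ∏ i ∈ s, (X + C (t i))
  have hvieta : P = ∑ k ∈ range (#s + 1),
      C (∑ S ∈ s.powersetCard k, ∏ i ∈ S, t i) * X ^ (#s - k) := by
    have hP : P = ((s.val.map t).map fun r ↦ X + C r).prod := by
      rw [Multiset.map_map]; rfl
    rw [hP, Multiset.prod_X_add_C_eq_sum_esymm, Multiset.card_map, card_val]
    simp_rw [Finset.esymm_map_val]
  have hderiv : derivative P = ∑ i ∈ s, ∏ j ∈ s.erase i, (X + C (t j)) := by
    simp [P, derivative_prod_finset]
  calc _ = eval a (P - derivative P) := by simp [P, hderiv, eval_prod, eval_finsetSum]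
    _ = _ := by
      rw [hvieta, map_sum, ← sum_sub_distrib]
      simp only [derivative_C_mul_X_pow, eval_finsetSum, eval_sub, eval_mul, eval_C, eval_pow,
        eval_X]
      exact sum_congr rfl fun k _ ↦ by ring

theorem pow_sub_natCast_mul_pow_pred_nonneg {R : Type*} [CommRing R] [LinearOrder R]
    [IsStrictOrderedRing R] {x : R} {m : ℕ} (h : (m : R) ≤ x) : 0 ≤ x ^ m - m * x ^ (m - 1) := by
  cases m with
  | zero => simp
  | succ m =>
    have hx : 0 ≤ x := le_trans (Nat.cast_nonneg _) h
    have : x ^ (m + 1) - (m + 1 : ℕ) * x ^ (m + 1 - 1) = (x - (m + 1 : ℕ)) * x ^ m := by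
      rw [Nat.add_sub_cancel]; ring
    rw [this]
    exact mul_nonneg (sub_nonneg.2 h) (pow_nonneg hx m)

theorem sum_inv_add_le_one {ι : Type*} [Fintype ι] {t : ι → ℝ} {a g : ℝ} (ht : ∀ i, 0 < t i)
    (hg : 0 ≤ g) (hprod : g ^ Fintype.card ι ≤ ∏ i, t i) (ha : (Fintype.card ι : ℝ) - 1 ≤ a)
    (hag : (Fintype.card ι : ℝ) - g ≤ a) :
    ∑ i, (a + t i)⁻¹ ≤ 1 := by
  classical
  set n := Fintype.card ι
  have hpos : ∀ i, 0 < a + t i := fun i ↦ by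
    have : (1 : ℝ) ≤ n := by exact_mod_cast Fintype.card_pos_iff.2 ⟨i⟩
    linarith [ht i]
  have hsum : ∑ i, (a + t i)⁻¹ = (∑ i, ∏ j ∈ univ.erase i, (a + t j)) / ∏ i, (a + t i) := by
    rw [sum_div]
    refine sum_congr rfl fun i _ ↦ ?_
    rw [← mul_prod_erase univ (fun j ↦ a + t j) (mem_univ i),
      div_mul_cancel_right₀ (prod_pos fun j _ ↦ hpos j).ne']
  rw [hsum, div_le_one (prod_pos fun i _ ↦ hpos i), ← sub_nonneg]
  have hconst := prod_add_sub_sum_prod_erase (univ : Finset ι) (fun _ ↦ g) a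
  simp only [prod_const, sum_const, card_erase_of_mem (mem_univ _), card_univ, nsmul_eq_mul,
    sum_powersetCard] at hconst
  have hexpand := prod_add_sub_sum_prod_erase (univ : Finset ι) t a
  rw [card_univ] at hexpand
  calc (0 : ℝ) ≤ (a + g) ^ n - n * (a + g) ^ (n - 1) :=
        pow_sub_natCast_mul_pow_pred_nonneg (by linarith)
    _ = ∑ k ∈ range (n + 1), (a ^ (n - k) - (n - k : ℕ) * a ^ (n - k - 1)) *
          (n.choose k * g ^ k) := hconst
    _ ≤ ∑ k ∈ range (n + 1), (a ^ (n - k) - (n - k : ℕ) * a ^ (n - k - 1)) *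
          ∑ S ∈ univ.powersetCard k, ∏ i ∈ S, t i := by
      refine sum_le_sum fun k hk_mem ↦ ?_
      rcases Nat.eq_zero_or_pos k with rfl | hk
      · simp
      have hnk : ((n - k : ℕ) : ℝ) + 1 ≤ n := by
        exact_mod_cast (by have := mem_range.1 hk_mem; omega : n - k + 1 ≤ n)
      have hweight : 0 ≤ a ^ (n - k) - (n - k : ℕ) * a ^ (n - k - 1) :=
        pow_sub_natCast_mul_pow_pred_nonneg (by linarith)
      gcongr
      have := choose_mul_pow_le_sum_powersetCard_prod (fun i _ ↦ (ht i).le) hg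
        (by rwa [card_univ]) k
      rwa [card_univ] at this
    _ = _ := hexpand.symm

theorem stmt4_general (n : ℕ) (hn : 0 < n) (σ : Equiv.Perm (Fin n)) (a : ℝ) (c : Fin n → ℝ)
    (hc : ∀ i, 0 < c i)
    (ha : max ((n : ℝ) - 1) ((n : ℝ) - (∏ i, c i) ^ ((1 : ℝ) / n)) ≤ a)
    (α : Fin n → ℝ) (hα : ∀ i, 0 < α i) :
    ∑ i, α i / (a * α i + c i * α (σ i)) ≤ 1 := by
  have hc_prod : 0 < ∏ i, c i := prod_pos fun i _ ↦ hc i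
  have hroot : ((∏ i, c i) ^ ((1 : ℝ) / n)) ^ n = ∏ i, c i := by
    rw [one_div]; exact Real.rpow_inv_natCast_pow hc_prod.le hn.ne'
  have hratio_prod : ∏ i, c i * α (σ i) / α i = ∏ i, c i := by
    rw [prod_div_distrib, prod_mul_distrib, Equiv.prod_comp,
      mul_div_cancel_right₀ _ (prod_pos fun i _ ↦ hα i).ne']
  have hterm : ∀ i, α i / (a * α i + c i * α (σ i)) = (a + c i * α (σ i) / α i)⁻¹ := fun i ↦ by
    have := (hα i).ne'
    field_simp
  simp_rw [hterm]
  refine sum_inv_add_le_one (g := (∏ i, c i) ^ ((1 : ℝ) / n))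
    (fun i ↦ div_pos (mul_pos (hc i) (hα _)) (hα i)) (by positivity) ?_ ?_ ?_
  · rw [Fintype.card_fin, hroot, hratio_prod]
  · simpa using le_of_max_le_left ha
  · simpa using le_of_max_le_right ha

theorem stmt4 (n : ℕ) (hn : 0 < n) (σ : Equiv.Perm (Fin n)) (a : ℝ) (c : Fin n → ℝ)
    (ha0 : 0 < a) (hc : ∀ i, 0 < c i)
    (ha : max ((n : ℝ) - 1) ((n : ℝ) - (∏ i, c i) ^ ((1 : ℝ) / n)) ≤ a)
    (α : Fin n → ℝ) (hα : ∀ i, 0 < α i) :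
    ∑ i, α i / (a * α i + c i * α (σ i)) ≤ 1 :=
  stmt4_general n hn σ a c hc ha α hα
end

section
/- Let a, c_1, ..., c_n be positive reals and σ a permutation of {1,...,n} that is a single cycle of length n. If for all positive reals α_1, ..., α_n one has Σ_{i=1}^{n} α_i / (a α_i + c_i α_{σ(i)}) ≤ 1, then a ≥ max(n - 1, n - (c_1 c_2 ··· c_n)^(1/n)). -/
open Finset

lemma exists_alpha (n : ℕ) (hn : 0 < n) (σ : Equiv.Perm (Fin n)) (hσ : σ.IsCycle)
    (hσn : σ.support.card = n) (r : Fin n → ℝ) (hr : ∀ i, 0 < r i)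
    (hprod : ∏ i, r i = 1) :
    ∃ α : Fin n → ℝ, (∀ i, 0 < α i) ∧ ∀ i, α (σ i) = r i * α i := by
  have hord : orderOf σ = n := by rw [hσ.orderOf, hσn]
  have hsupp : σ.support = Finset.univ := by
    apply Finset.eq_univ_of_card
    simpa using hσn
  have hmove : ∀ x : Fin n, σ x ≠ x := fun x =>
    Equiv.Perm.mem_support.mp (hsupp ▸ Finset.mem_univ x)
  set x0 : Fin n := ⟨0, hn⟩ with hx0
  set e : Fin n → Fin n := fun k => (σ ^ (k : ℕ)) x0 with he
  have key : ∀ j k : Fin n, (j : ℕ) ≤ (k : ℕ) → e j = e k → j = k := by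
    intro j k hle hjk
    have hpow : (σ ^ ((k : ℕ) - (j : ℕ))) ((σ ^ (j : ℕ)) x0) = (σ ^ (j : ℕ)) x0 := by
      rw [← Equiv.Perm.mul_apply, ← pow_add, Nat.sub_add_cancel hle]
      exact hjk.symm
    have h1 : σ ^ ((k : ℕ) - (j : ℕ)) = 1 :=
      (hσ.pow_eq_one_iff' (hmove _)).2 hpow
    have hdvd : n ∣ (k : ℕ) - (j : ℕ) := by
      have hd := orderOf_dvd_of_pow_eq_one h1
      rwa [hord] at hd
    have hz : (k : ℕ) - (j : ℕ) = 0 :=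
      Nat.eq_zero_of_dvd_of_lt hdvd (lt_of_le_of_lt (Nat.sub_le _ _) k.isLt)
    exact Fin.ext (Nat.le_antisymm hle (Nat.le_of_sub_eq_zero hz))
  have hinj : Function.Injective e := by
    intro j k hjk
    rcases le_total (j : ℕ) (k : ℕ) with hle | hle
    · exact key j k hle hjk
    · exact (key k j hle hjk.symm).symm
  have hbij : Function.Bijective e := Finite.injective_iff_bijective.mp hinj
  set E : Fin n ≃ Fin n := Equiv.ofBijective e hbij with hE
  have hEsymm : ∀ k : Fin n, E.symm (e k) = k := fun k => E.symm_apply_apply k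
  set R : ℕ → ℝ := fun k => ∏ j ∈ Finset.range k, r ((σ ^ j) x0) with hR
  have hRpos : ∀ k, 0 < R k := fun k => Finset.prod_pos fun j _ => hr _
  have hRn : R n = 1 := by
    have h1 : R n = ∏ k : Fin n, r (e k) :=
      (Fin.prod_univ_eq_prod_range (fun j => r ((σ ^ j) x0)) n).symm
    rw [h1, ← hprod]
    exact Function.Bijective.prod_comp hbij r
  have hRsucc : ∀ m : ℕ, R (m + 1) = r ((σ ^ m) x0) * R m := by
    intro m
    rw [hR]
    simp only [Finset.prod_range_succ, mul_comm]
  refine ⟨fun i => R ((E.symm i : Fin n) : ℕ), fun i => hRpos _, fun i => ?_⟩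
  show R ((E.symm (σ i) : Fin n) : ℕ) = r i * R ((E.symm i : Fin n) : ℕ)
  set k : Fin n := E.symm i with hk
  have hik : i = (σ ^ (k : ℕ)) x0 := (E.apply_symm_apply i).symm
  have hstep : σ i = (σ ^ ((k : ℕ) + 1)) x0 := by
    rw [hik, pow_succ', Equiv.Perm.mul_apply]
  by_cases hkn : (k : ℕ) + 1 < n
  · have hσi : σ i = e ⟨(k : ℕ) + 1, hkn⟩ := hstep
    rw [hσi, hEsymm]
    show R ((k : ℕ) + 1) = r i * R (k : ℕ)
    rw [hRsucc, ← hik]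
  · have hkeq : (k : ℕ) + 1 = n := Nat.le_antisymm k.isLt (not_lt.mp hkn)
    have hσi : σ i = e x0 := by
      have hfix : (σ ^ n) x0 = x0 := by
        have hp := pow_orderOf_eq_one σ
        rw [hord] at hp
        rw [hp]; rfl
      rw [hstep, hkeq, hfix, he]
      simp [hx0]
    rw [hσi, hEsymm]
    have h2 : r i * R (k : ℕ) = R ((k : ℕ) + 1) := by rw [hRsucc, ← hik]
    rw [h2, hkeq, hRn]
    simp [hR, hx0]

lemma term_eq (a : ℝ) (x y q : ℝ) (hx : 0 < x) (hq : y = q * x) (_hcc : 0 < q) :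
    x / (a * x + y) = 1 / (a + q) := by
  rw [hq, show a * x + q * x = (a + q) * x from by ring, mul_comm, ← div_div,
    div_self hx.ne']

theorem stmt5 (n : ℕ) (hn : 0 < n) (σ : Equiv.Perm (Fin n)) (hσ : σ.IsCycle)
    (hσn : σ.support.card = n) (a : ℝ) (c : Fin n → ℝ)
    (ha0 : 0 < a) (hc : ∀ i, 0 < c i)
    (h : ∀ α : Fin n → ℝ, (∀ i, 0 < α i) →
      ∑ i, α i / (a * α i + c i * α (σ i)) ≤ 1) :
    max ((n : ℝ) - 1) ((n : ℝ) - (∏ i, c i) ^ ((1 : ℝ) / n)) ≤ a := by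
  have hcp : (0 : ℝ) < ∏ i, c i := Finset.prod_pos fun i _ => hc i
  have hnR : (0 : ℝ) < n := Nat.cast_pos.mpr hn
  set g : ℝ := (∏ i, c i) ^ ((1 : ℝ) / n) with hgdef
  have hg : 0 < g := Real.rpow_pos_of_pos hcp _
  have hgn : g ^ n = ∏ i, c i := by
    rw [hgdef, ← Real.rpow_natCast ((∏ i, c i) ^ ((1 : ℝ) / n)) n,
      ← Real.rpow_mul hcp.le, one_div, inv_mul_cancel₀ hnR.ne', Real.rpow_one]
  -- the general sum bound for a given ratio function
  have key : ∀ q : Fin n → ℝ, (∀ i, 0 < q i) → (∏ i, q i) = 1 →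
      ∑ i, (1 : ℝ) / (a + c i * q i) ≤ 1 := by
    intro q hq hq1
    have hr : ∀ i, 0 < c i * q i := fun i => mul_pos (hc i) (hq i)
    obtain ⟨α, hα, hrel⟩ := exists_alpha n hn σ hσ hσn (fun i => c i * q i / c i)
      (fun i => div_pos (hr i) (hc i)) (by
        have : ∀ i, c i * q i / c i = q i := fun i => by
          rw [mul_comm, mul_div_assoc, div_self (hc i).ne', mul_one]
        simp only [this]; exact hq1)
    have hsum := h α hα
    calc ∑ i, (1 : ℝ) / (a + c i * q i)
        = ∑ i, α i / (a * α i + c i * α (σ i)) := by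
          refine Finset.sum_congr rfl fun i _ => ?_
          rw [term_eq a (α i) (c i * α (σ i)) (c i * q i) (hα i) ?_ (hr i)]
          have hdiv : c i * q i / c i = q i := by
            rw [mul_comm, mul_div_assoc, div_self (hc i).ne', mul_one]
          rw [hrel i, hdiv]
          ring
      _ ≤ 1 := hsum
  apply max_le
  · -- a ≥ n - 1
    apply le_of_forall_pos_le_add
    intro δ hδ
    set M : ℝ := ∑ i, c i with hM
    have hM0 : 0 < M := Finset.sum_pos (fun i _ => hc i) ⟨⟨0, hn⟩, Finset.mem_univ _⟩
    have hcM : ∀ i, c i ≤ M := fun i =>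
      Finset.single_le_sum (fun j _ => (hc j).le) (Finset.mem_univ i)
    set ε : ℝ := δ / M with hε
    have hε0 : 0 < ε := div_pos hδ hM0
    set i₀ : Fin n := ⟨0, hn⟩ with hi₀
    set q : Fin n → ℝ := fun i => if i = i₀ then ε⁻¹ ^ (n - 1) else ε with hqdef
    have hq : ∀ i, 0 < q i := by
      intro i
      rw [hqdef]
      dsimp only
      split
      · exact pow_pos (inv_pos.mpr hε0) _
      · exact hε0
    have hq1 : ∏ i, q i = 1 := by
      rw [← Finset.mul_prod_erase Finset.univ q (Finset.mem_univ i₀)]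
      have h1 : q i₀ = ε⁻¹ ^ (n - 1) := if_pos rfl
      have h2 : ∏ i ∈ Finset.univ.erase i₀, q i = ε ^ (n - 1) := by
        rw [Finset.prod_congr rfl (fun i hi => if_neg (Finset.mem_erase.mp hi).1 :
          ∀ i ∈ Finset.univ.erase i₀, q i = ε)]
        rw [Finset.prod_const, Finset.card_erase_of_mem (Finset.mem_univ i₀),
          Finset.card_univ, Fintype.card_fin]
      rw [h1, h2, inv_pow, inv_mul_cancel₀ (pow_ne_zero _ hε0.ne')]
    have hsum := key q hq hq1
    have hdrop : ∑ i ∈ Finset.univ.erase i₀, (1 : ℝ) / (a + c i * ε) ≤ 1 := by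
      refine le_trans ?_ hsum
      have : ∑ i ∈ Finset.univ.erase i₀, (1 : ℝ) / (a + c i * ε)
          = ∑ i ∈ Finset.univ.erase i₀, (1 : ℝ) / (a + c i * q i) := by
        refine Finset.sum_congr rfl fun i hi => ?_
        rw [show q i = ε from if_neg (Finset.mem_erase.mp hi).1]
      rw [this]
      refine Finset.sum_le_sum_of_subset_of_nonneg (Finset.subset_univ _) ?_
      intro i _ _
      have := mul_pos (hc i) (hq i)
      positivity
    have hlb : ∀ i ∈ Finset.univ.erase i₀,
        (1 : ℝ) / (a + M * ε) ≤ 1 / (a + c i * ε) := by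
      intro i _
      apply one_div_le_one_div_of_le
      · have := mul_pos (hc i) hε0
        linarith
      · have := hcM i
        nlinarith
    have hcard : ((Finset.univ.erase i₀).card : ℝ) = (n : ℝ) - 1 := by
      rw [Finset.card_erase_of_mem (Finset.mem_univ i₀), Finset.card_univ,
        Fintype.card_fin, Nat.cast_sub hn]
      simp
    have hfin : ((n : ℝ) - 1) * (1 / (a + M * ε)) ≤ 1 := by
      calc ((n : ℝ) - 1) * (1 / (a + M * ε))
          = ∑ _i ∈ Finset.univ.erase i₀, (1 : ℝ) / (a + M * ε) := by
            rw [Finset.sum_const, nsmul_eq_mul, hcard]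
        _ ≤ ∑ i ∈ Finset.univ.erase i₀, (1 : ℝ) / (a + c i * ε) :=
            Finset.sum_le_sum hlb
        _ ≤ 1 := hdrop
    have hMε : M * ε = δ := by
      rw [hε, mul_div_cancel₀ _ hM0.ne']
    have hpos : 0 < a + M * ε := by have := mul_pos hM0 hε0; linarith
    rw [mul_one_div, div_le_one hpos] at hfin
    linarith [hMε ▸ hfin]
  · -- a ≥ n - g
    have hq1 : ∏ i, g / c i = 1 := by
      rw [Finset.prod_div_distrib, Finset.prod_const, Finset.card_univ,
        Fintype.card_fin, hgn, div_self hcp.ne']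
    have hsum := key (fun i => g / c i) (fun i => div_pos hg (hc i)) hq1
    have heq : ∀ i : Fin n, (1 : ℝ) / (a + c i * (g / c i)) = 1 / (a + g) := by
      intro i
      rw [mul_div_assoc', mul_comm, mul_div_assoc, div_self (hc i).ne', mul_one]
    rw [Finset.sum_congr rfl (fun i _ => heq i), Finset.sum_const, Finset.card_univ,
      Fintype.card_fin, nsmul_eq_mul, mul_one_div, div_le_one (by linarith)] at hsum
    linarith
end

section
/- Let σ ∈ S_n be a cycle of length n and a, c_1, ..., c_n > 0. If the map Θ(X) = diag(a x_{11} + c_1 x_{σ(1)σ(1)}, ..., a x_{nn} + c_n x_{σ(n)σ(n)}) - X is positive on M_n (maps positive semidefinite matrices to positive semidefinite matrices), then a ≥ max(n - 1, n - (c_1···c_n)^(1/n)). -/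
/-
Test the positivity of Θ on the rank-one matrix X = t tᵀ (t real) against the vector with entries
y_i = t_i / d_i, where d_i = a t_i² + c_i t_{σ(i)}² are the diagonal entries of the first term of
Θ(X): this gives S - S² ≥ 0 for S = ∑ t_i² / d_i, hence S ≤ 1. Since σ is a single n-cycle, the
ratios t_{σ(i)}² / t_i² can be prescribed to be any positive u_i with ∏ u_i = 1; writing
w_i = c_i u_i, this says ∑ 1 / (a + w_i) ≤ 1 whenever w_i > 0 and ∏ w_i = ∏ c_i. All w_i equal
gives n ≤ a + (∏ c_i)^(1/n); all but one w_i equal to a small x > 0 gives n - 1 ≤ a + x.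
-/

open Finset Matrix
open scoped ComplexOrder

/-- The map `Θ^{(n,σ)}[a; c₁,…,c_n]` on `n × n` complex matrices. -/
def ThetaMap (n : ℕ) (σ : Equiv.Perm (Fin n)) (a : ℝ) (c : Fin n → ℝ)
    (X : Matrix (Fin n) (Fin n) ℂ) : Matrix (Fin n) (Fin n) ℂ :=
  Matrix.diagonal (fun i => (a : ℂ) * X i i + (c i : ℂ) * X (σ i) (σ i)) - X

namespace Equiv.Perm

variable {α : Type*} {f : Perm α}

@[to_additive]
theorem IsCycleOn.prod_range_pow_apply {M : Type*} [CommMonoid M] {s : Finset α}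
    (hf : f.IsCycleOn s) {b : α} (hb : b ∈ s) (u : α → M) :
    ∏ k ∈ range #s, u ((f ^ k) b) = ∏ x ∈ s, u x := by
  refine prod_nbij (fun k => (f ^ k) b) (fun k _ => hf.1.mapsTo.perm_pow k hb) ?_ ?_
    fun _ _ => rfl
  · intro k hk k' hk' h
    exact ((hf.pow_apply_eq_pow_apply hb).1 h).eq_of_lt_of_lt (mem_range.1 hk) (mem_range.1 hk')
  · intro x hx
    obtain ⟨k, hk, rfl⟩ := hf.exists_pow_eq hb hx
    exact ⟨k, mem_range.2 hk, rfl⟩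

/-- `s ((f ^ k) b)` is the product of `u` along the first `k` steps of the orbit of `b`; this is
well defined because the product over a full turn is `∏ x, u x = 1`. -/
@[to_additive]
theorem IsCycleOn.exists_apply_eq_mul_of_prod_eq_one {G : Type*} [CommGroup G] [Fintype α]
    (hf : f.IsCycleOn (univ : Finset α)) {u : α → G} (hu : ∏ x, u x = 1) :
    ∃ s : α → G, ∀ x, s (f x) = u x * s x := by
  rcases isEmpty_or_nonempty α with hα | ⟨⟨b⟩⟩
  · exact ⟨1, isEmptyElim⟩
  set P : ℕ → G := fun m => ∏ k ∈ range m, u ((f ^ k) b)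
  have hP : Function.Periodic P #(univ : Finset α) := fun m => by
    simp only [P, prod_range_add, pow_add, pow_mul_comm f m, Perm.mul_apply,
      hf.prod_range_pow_apply (mem_univ _), hu, mul_one]
  have hP_congr {m m' : ℕ} (h : (f ^ m) b = (f ^ m') b) : P m = P m' := by
    rw [← hP.map_mod_nat m, ← hP.map_mod_nat m', (hf.pow_apply_eq_pow_apply (mem_univ b)).1 h]
  choose k hk using fun x => hf.exists_pow_eq (mem_univ b) (mem_univ x)
  refine ⟨fun x => P (k x), fun x => ?_⟩
  have h_succ : (f ^ (k x + 1)) b = f x := by rw [pow_succ', Perm.mul_apply, (hk x).2]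
  show P (k (f x)) = u x * P (k x)
  rw [hP_congr ((hk (f x)).2.trans h_succ.symm)]
  simp only [P, prod_range_succ, (hk x).2, mul_comm]

theorem IsCycle.isCycleOn_univ [Fintype α] [DecidableEq α] (hf : f.IsCycle)
    (h : #f.support = Fintype.card α) : f.IsCycleOn (univ : Finset α) := by
  convert hf.isCycleOn
  ext x
  simp [← mem_support, eq_univ_of_card _ h]

end Equiv.Perm

section ThetaMap

variable {n : ℕ} {σ : Equiv.Perm (Fin n)} {a : ℝ} {c : Fin n → ℝ}

theorem sum_sq_div_le_one_of_posSemidef_thetaMap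
    (hpos : ∀ X : Matrix (Fin n) (Fin n) ℂ, X.PosSemidef → (ThetaMap n σ a c X).PosSemidef)
    (t : Fin n → ℝ) : ∑ i, t i ^ 2 / (a * t i ^ 2 + c i * t (σ i) ^ 2) ≤ 1 := by
  set d : Fin n → ℝ := fun i => a * t i ^ 2 + c i * t (σ i) ^ 2
  set S := ∑ i, t i ^ 2 / d i
  let v : Fin n → ℂ := fun i => t i
  let y : Fin n → ℂ := fun i => (t i / d i : ℝ)
  have hv : star v = v := by ext; simp [v]
  have hy : star y = y := by ext; simp [y]
  have hvy : v ⬝ᵥ y = S := by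
    simp only [v, y, S, dotProduct]
    push_cast
    congr 1
    ext
    ring
  have h_diag : star y ⬝ᵥ (diagonal (fun i => (a : ℂ) * vecMulVec v (star v) i i
      + c i * vecMulVec v (star v) (σ i) (σ i)) *ᵥ y) = S := by
    -- no positivity is needed: where `d i = 0`, both sides of `h_term` are `0`
    have h_term (i : Fin n) : t i / d i * (d i * (t i / d i)) = t i ^ 2 / d i := by
      rcases eq_or_ne (d i) 0 with h | h
      · simp [h]
      · field_simp
    simp only [hy, dotProduct, mulVec_diagonal, vecMulVec_apply, hv, S, ← h_term]
    push_cast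
    simp [v, y, d, sq]
  have h_rank_one : star y ⬝ᵥ (vecMulVec v (star v) *ᵥ y) = S * S := by
    rw [vecMulVec_mulVec, hv, dotProduct_smul, hy, dotProduct_comm y v, hvy]
    simp [MulOpposite.smul_eq_mul_unop]
  have h := (hpos _ (posSemidef_vecMulVec_self_star v)).dotProduct_mulVec_nonneg y
  rw [ThetaMap, sub_mulVec, dotProduct_sub, h_diag, h_rank_one] at h
  have : 0 ≤ S - S * S := by exact_mod_cast h
  nlinarith

theorem sum_inv_add_le_one_of_posSemidef_thetaMap (hσ : σ.IsCycleOn (univ : Finset (Fin n)))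
    (hc : ∀ i, 0 < c i)
    (hpos : ∀ X : Matrix (Fin n) (Fin n) ℂ, X.PosSemidef → (ThetaMap n σ a c X).PosSemidef)
    {w : Fin n → ℝ} (hw : ∀ i, 0 < w i) (hwc : ∏ i, w i = ∏ i, c i) :
    ∑ i, (a + w i)⁻¹ ≤ 1 := by
  have hu (i : Fin n) : 0 < w i / c i := div_pos (hw i) (hc i)
  obtain ⟨s, hs⟩ := hσ.exists_apply_eq_add_of_sum_eq_zero (u := fun i => Real.log (w i / c i)) <| by
    rw [← Real.log_prod fun i _ => (hu i).ne', prod_div_distrib, hwc,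
      div_self (prod_pos fun i _ => hc i).ne', Real.log_one]
  have h_sq (x : ℝ) : Real.exp (x / 2) ^ 2 = Real.exp x := by
    rw [← Real.exp_nat_mul]
    ring_nf
  convert sum_sq_div_le_one_of_posSemidef_thetaMap hpos (fun i => Real.exp (s i / 2)) using 2 with i
  rw [h_sq, h_sq, hs, Real.exp_add, Real.exp_log (hu i), ← mul_assoc, mul_div_cancel₀ _ (hc i).ne',
    ← add_mul, div_mul_cancel_right₀ (Real.exp_pos _).ne']

end ThetaMap

section HarmonicBound

variable {n : ℕ} {a P : ℝ}

theorem sub_one_le_of_forall_sum_inv_add_le_one (hn : n ≠ 0) (ha : 0 < a) (hP : 0 < P)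
    (h : ∀ w : Fin n → ℝ, (∀ i, 0 < w i) → ∏ i, w i = P → ∑ i, (a + w i)⁻¹ ≤ 1) :
    (n : ℝ) - 1 ≤ a := by
  obtain ⟨m, rfl⟩ := Nat.exists_eq_add_one_of_ne_zero hn
  push_cast
  refine le_of_forall_pos_le_add fun x hx => ?_
  have hw := h (Fin.cons (P / x ^ m) fun _ => x) (Fin.cases (by simpa using div_pos hP (pow_pos hx m)) fun _ => by simpa using hx)
    (by simp [Fin.prod_univ_succ, hx.ne'])
  simp only [Fin.sum_univ_succ, Fin.cons_zero, Fin.cons_succ, sum_const, card_univ,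
    Fintype.card_fin, nsmul_eq_mul] at hw
  have : 0 ≤ (a + P / x ^ m)⁻¹ := by positivity
  have : (m : ℝ) / (a + x) ≤ 1 := by rw [div_eq_mul_inv]; linarith
  rw [div_le_one (by positivity)] at this
  linarith

theorem sub_rpow_le_of_forall_sum_inv_add_le_one (hn : n ≠ 0) (ha : 0 < a) (hP : 0 < P)
    (h : ∀ w : Fin n → ℝ, (∀ i, 0 < w i) → ∏ i, w i = P → ∑ i, (a + w i)⁻¹ ≤ 1) :
    (n : ℝ) - P ^ ((1 : ℝ) / n) ≤ a := by
  have hr : 0 < P ^ ((1 : ℝ) / n) := Real.rpow_pos_of_pos hP _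
  have hw := h (fun _ => P ^ ((1 : ℝ) / n)) (fun _ => hr)
    (by simp [one_div, Real.rpow_inv_natCast_pow hP.le hn])
  simp only [sum_const, card_univ, Fintype.card_fin, nsmul_eq_mul, ← div_eq_mul_inv] at hw
  rw [div_le_one (by positivity)] at hw
  linarith

end HarmonicBound

theorem stmt9 (n : ℕ) (hn : 0 < n) (σ : Equiv.Perm (Fin n)) (hσ : σ.IsCycle)
    (hσn : σ.support.card = n) (a : ℝ) (c : Fin n → ℝ)
    (ha0 : 0 < a) (hc : ∀ i, 0 < c i)
    (hpos : ∀ X : Matrix (Fin n) (Fin n) ℂ, X.PosSemidef → (ThetaMap n σ a c X).PosSemidef) :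
    max ((n : ℝ) - 1) ((n : ℝ) - (∏ i, c i) ^ ((1 : ℝ) / n)) ≤ a := by
  have hcycle := hσ.isCycleOn_univ (by simpa using hσn)
  have key (w : Fin n → ℝ) (hw : ∀ i, 0 < w i) (hwc : ∏ i, w i = ∏ i, c i) :
      ∑ i, (a + w i)⁻¹ ≤ 1 :=
    sum_inv_add_le_one_of_posSemidef_thetaMap hcycle hc hpos hw hwc
  have hP : 0 < ∏ i, c i := prod_pos fun i _ => hc i
  exact max_le (sub_one_le_of_forall_sum_inv_add_le_one hn.ne' ha0 hP key)
    (sub_rpow_le_of_forall_sum_inv_add_le_one hn.ne' ha0 hP key)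
end

section
/- Let σ ∈ S_n satisfy σ(i) ≠ i for all i. Let a, c_1, ..., c_n > 0 and let Θ(X) = diag(a x_{11} + c_1 x_{σ(1)σ(1)}, ..., a x_{nn} + c_n x_{σ(n)σ(n)}) - X on M_n. The Choi matrix C_Θ = Σ_{i,j} E_{ij} ⊗ Θ(E_{ij}) in M_n ⊗ M_n has eigenvalues 0 (with multiplicity n² - 2n), a (with multiplicity n - 1), a - n (with multiplicity 1), and c_1, ..., c_n. -/
open Finset Matrix Polynomial
open scoped Kronecker

/-- The Choi matrix of `Θ^{(n,σ)}[a; c₁,…,c_n]`. -/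
noncomputable def ChoiMatrix (n : ℕ) (σ : Equiv.Perm (Fin n)) (a : ℝ) (c : Fin n → ℝ) :
    Matrix (Fin n × Fin n) (Fin n × Fin n) ℂ :=
  ∑ i, ∑ j, (Matrix.single i j (1 : ℂ)) ⊗ₖ
    ThetaMap n σ a c (Matrix.single i j (1 : ℂ))

lemma choi_apply (n : ℕ) (σ : Equiv.Perm (Fin n)) (a : ℝ) (c : Fin n → ℝ)
    (p r : Fin n × Fin n) :
    ChoiMatrix n σ a c p r =
      (if p.2 = r.2 then
        (if p.1 = p.2 ∧ r.1 = p.2 then (a : ℂ) else 0) +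
        (if p.1 = σ p.2 ∧ r.1 = σ p.2 then (c p.2 : ℂ) else 0) else 0) -
      (if p.1 = p.2 ∧ r.1 = r.2 then 1 else 0) := by
  obtain ⟨p1, p2⟩ := p
  obtain ⟨r1, r2⟩ := r
  simp only [ChoiMatrix, Matrix.sum_apply, Matrix.kroneckerMap_apply,
    Matrix.single, Matrix.of_apply, ThetaMap, Matrix.sub_apply,
    Matrix.diagonal_apply]
  rw [Finset.sum_eq_single p1, Finset.sum_eq_single r1]
  · simp only [if_pos rfl, and_true, true_and]
    by_cases h : p2 = r2 <;> simp [h, and_comm]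
  all_goals intros <;> simp_all

lemma eval_charpoly {n : ℕ} (M : Matrix (Fin n) (Fin n) ℂ) (z : ℂ) :
    (M.charpoly).eval z = (z • (1 : Matrix (Fin n) (Fin n) ℂ) - M).det := by
  rw [Matrix.charpoly, ← Polynomial.coe_evalRingHom, RingHom.map_det]
  congr 1
  ext i j
  by_cases h : i = j
  · subst h; simp [Matrix.charmatrix_apply_eq, Matrix.one_apply]
  · simp [Matrix.charmatrix_apply_ne _ _ _ h, Matrix.one_apply, h]

lemma charpoly_aI_sub_J (n : ℕ) (hn : 0 < n) (a : ℂ) :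
    (a • (1 : Matrix (Fin n) (Fin n) ℂ) - Matrix.of (fun _ _ => (1:ℂ))).charpoly =
      (X - C a) ^ (n - 1) * (X - C (a - n)) := by
  apply Polynomial.eq_of_infinite_eval_eq
  apply Set.Infinite.mono (s := {z : ℂ | z ≠ a})
  · intro z hz
    have hz' : z - a ≠ 0 := sub_ne_zero.mpr hz
    simp only [Set.mem_setOf_eq, eval_charpoly, eval_mul, eval_pow, eval_sub, eval_X, eval_C]
    have key : z • (1 : Matrix (Fin n) (Fin n) ℂ) - (a • 1 - Matrix.of fun _ _ => 1)
        = (z - a) • ((1 : Matrix (Fin n) (Fin n) ℂ) +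
            Matrix.replicateCol (Fin 1) (fun _ => (z - a)⁻¹) * Matrix.replicateRow (Fin 1) (fun _ => (1:ℂ))) := by
      ext i j
      simp [Matrix.one_apply, Matrix.mul_apply, Matrix.sub_apply, Matrix.smul_apply,
        Matrix.add_apply, Matrix.replicateCol_apply, Matrix.replicateRow_apply, Fin.sum_univ_succ]
      by_cases h : i = j <;> simp [h] <;> field_simp <;> ring
    rw [key, Matrix.det_smul]
    erw [Matrix.det_one_add_replicateCol_mul_replicateRow (ι := Fin 1)]
    simp only [dotProduct, Finset.sum_const, Finset.card_univ, Fintype.card_fin,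
      nsmul_eq_mul, mul_one]
    have : (z - a) ^ n = (z - a) ^ (n - 1) * (z - a) := by
      rw [← pow_succ, Nat.sub_add_cancel hn]
    rw [this]
    field_simp
    ring
  · apply Set.infinite_of_finite_compl
    have : {z : ℂ | z ≠ a}ᶜ = {a} := by ext z; simp [not_not]
    rw [this]; exact Set.finite_singleton a

def blockEquiv (n : ℕ) : (Fin n ⊕ {x : Fin n × Fin n // x.1 ≠ x.2}) ≃ (Fin n × Fin n) where
  toFun := Sum.elim (fun i => (i, i)) Subtype.val
  invFun := fun x => if h : x.1 = x.2 then Sum.inl x.1 else Sum.inr ⟨x, h⟩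
  left_inv := by
    rintro (i | ⟨⟨p, q⟩, h⟩)
    · simp
    · simp [h]
  right_inv := by
    rintro ⟨p, q⟩
    by_cases h : p = q <;> simp [h]

lemma charpoly_diagonal {m : Type*} [Fintype m] [DecidableEq m] (d : m → ℂ) :
    (Matrix.diagonal d).charpoly = ∏ i, (X - C (d i)) := by
  rw [Matrix.charpoly]
  have : (Matrix.diagonal d).charmatrix = Matrix.diagonal (fun i => (X : ℂ[X]) - C (d i)) := by
    ext i j
    by_cases h : i = j
    · subst h; simp
    · simp [Matrix.charmatrix_apply_ne _ _ _ h, Matrix.diagonal_apply_ne _ h]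
  rw [this, Matrix.det_diagonal]

lemma choi_block (n : ℕ) (σ : Equiv.Perm (Fin n)) (hσ : ∀ i, σ i ≠ i)
    (a : ℝ) (c : Fin n → ℝ) :
    (ChoiMatrix n σ a c).submatrix (blockEquiv n) (blockEquiv n) =
      Matrix.fromBlocks ((a : ℂ) • 1 - Matrix.of fun _ _ => 1) 0 0
        (Matrix.diagonal fun x : {x : Fin n × Fin n // x.1 ≠ x.2} =>
          if x.val.1 = σ x.val.2 then (c x.val.2 : ℂ) else 0) := by
  ext x y
  rcases x with i | ⟨⟨p1, p2⟩, hp⟩ <;> rcases y with j | ⟨⟨r1, r2⟩, hr⟩ <;>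
    simp only [Matrix.submatrix_apply, blockEquiv, Equiv.coe_fn_mk, Sum.elim_inl,
      Sum.elim_inr, choi_apply, Matrix.fromBlocks_apply₁₁, Matrix.fromBlocks_apply₁₂,
      Matrix.fromBlocks_apply₂₁, Matrix.fromBlocks_apply₂₂, Matrix.sub_apply,
      Matrix.smul_apply, Matrix.one_apply, Matrix.of_apply, Matrix.zero_apply,
      Matrix.diagonal_apply]
  · -- diagonal block
    by_cases h : i = j
    · subst h
      have e2 : ¬(i = σ i ∧ i = σ i) := fun hh => hσ i hh.1.symm
      simp [e2, Ne.symm (hσ i)]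
    · simp [h]
  · -- block 12
    replace hr : r1 ≠ r2 := hr
    have e2 : ¬(i = σ i ∧ r1 = σ i) := fun hh => hσ i hh.1.symm
    by_cases h : i = r2
    · subst h
      have e1 : ¬(i = i ∧ r1 = i) := fun hh => hr hh.2
      simp [e1, e2, hr]
    · simp [h, e2, hr]
  · -- block 21
    replace hp : p1 ≠ p2 := hp
    have e1 : ¬(p1 = p2 ∧ j = p2) := fun hh => hp hh.1
    have e3 : ¬(p1 = p2 ∧ j = j) := fun hh => hp hh.1
    by_cases h : p2 = j
    · subst h
      have e2 : ¬(p1 = σ p2 ∧ p2 = σ p2) := fun hh => hσ p2 hh.2.symm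
      simp [e1, e2, e3, hp]
    · simp [h, e3, hp]
  · -- block 22
    replace hp' : p1 ≠ p2 := hp
    have eA : ¬(p1 = p2 ∧ r1 = p2) := fun hh => hp' hh.1
    have eL : ¬(p1 = p2 ∧ r1 = r2) := fun hh => hp' hh.1
    have hd : ((⟨(p1, p2), hp⟩ : {x : Fin n × Fin n // x.1 ≠ x.2}) = ⟨(r1, r2), hr⟩)
        ↔ (p1 = r1 ∧ p2 = r2) := by
      simp [Subtype.ext_iff, Prod.ext_iff]
    rw [if_neg eL, sub_zero]
    by_cases h2 : p2 = r2
    · subst h2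
      rw [if_pos rfl, if_neg eA, zero_add]
      by_cases hpr : p1 = r1
      · subst hpr
        rw [if_pos (hd.mpr ⟨rfl, rfl⟩)]
        by_cases hB : p1 = σ p2
        · rw [if_pos ⟨hB, hB⟩, if_pos hB]
        · rw [if_neg (fun hh => hB hh.1), if_neg hB]
      · rw [if_neg (fun hh => hpr (hd.mp hh).1),
          if_neg (fun hh : p1 = σ p2 ∧ r1 = σ p2 => hpr (hh.1.trans hh.2.symm))]
    · rw [if_neg h2, if_neg (fun hh => h2 (hd.mp hh).2)]

theorem stmt10 (n : ℕ) (hn : 0 < n) (σ : Equiv.Perm (Fin n)) (hσ : ∀ i, σ i ≠ i)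
    (a : ℝ) (c : Fin n → ℝ) (ha0 : 0 < a) (hc : ∀ i, 0 < c i) :
    (ChoiMatrix n σ a c).charpoly =
      X ^ (n ^ 2 - 2 * n) * (X - C (a : ℂ)) ^ (n - 1) * (X - C ((a : ℂ) - n)) *
        ∏ i, (X - C ((c i : ℂ))) := by
  have h0 : (ChoiMatrix n σ a c).charpoly
      = ((ChoiMatrix n σ a c).submatrix (blockEquiv n) (blockEquiv n)).charpoly := by
    rw [← Matrix.charpoly_reindex (blockEquiv n).symm]
    congr 1
  rw [h0, choi_block n σ hσ a c, Matrix.charpoly_fromBlocks_zero₂₁,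
    charpoly_aI_sub_J n hn, _root_.charpoly_diagonal]
  -- compute the product over the off-diagonal subtype
  have hprod : (∏ x : {x : Fin n × Fin n // x.1 ≠ x.2},
        ((X : ℂ[X]) - C (if x.val.1 = σ x.val.2 then (c x.val.2 : ℂ) else 0)))
      = X ^ (n ^ 2 - 2 * n) * ∏ i, (X - C ((c i : ℂ))) := by
    rw [← Finset.prod_subtype (Finset.univ.offDiag)
        (fun x => by simp [Finset.mem_offDiag]) 
        (fun x => (X : ℂ[X]) - C (if x.1 = σ x.2 then (c x.2 : ℂ) else 0))]
    have step : ∀ x ∈ Finset.univ.offDiag,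
        ((X : ℂ[X]) - C (if x.1 = σ x.2 then (c x.2 : ℂ) else 0))
          = if x.1 = σ x.2 then (X - C ((c x.2 : ℂ))) else X := by
      intro x _
      split_ifs <;> simp
    rw [Finset.prod_congr rfl step, Finset.prod_ite]
    have himg : (Finset.univ.offDiag.filter (fun x : Fin n × Fin n => x.1 = σ x.2))
        = Finset.univ.image (fun q : Fin n => (σ q, q)) := by
      ext ⟨p1, p2⟩
      simp only [Finset.mem_filter, Finset.mem_offDiag, Finset.mem_image, Finset.mem_univ,
        true_and]
      constructor
      · rintro ⟨h1, h2⟩; exact ⟨p2, by simp [h2.symm]⟩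
      · rintro ⟨q, hq⟩
        obtain ⟨hq1, hq2⟩ : σ q = p1 ∧ q = p2 := by simpa [Prod.ext_iff] using hq
        subst hq1; subst hq2
        exact ⟨hσ q, rfl⟩
    have hinj : Function.Injective (fun q : Fin n => ((σ q, q) : Fin n × Fin n)) := by
      intro x y hxy; simpa using congrArg Prod.snd hxy
    rw [himg, Finset.prod_image (fun x _ y _ h => hinj h), Finset.prod_const]
    have hcard1 : (Finset.univ.image (fun q : Fin n => ((σ q, q) : Fin n × Fin n))).card = n := by
      rw [Finset.card_image_of_injective _ hinj, Finset.card_univ, Fintype.card_fin]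
    have hcard2 : (Finset.univ.offDiag.filter
        (fun x : Fin n × Fin n => ¬ x.1 = σ x.2)).card = n ^ 2 - 2 * n := by
      have htot := Finset.card_filter_add_card_filter_not
        (s := Finset.univ.offDiag) (p := fun x : Fin n × Fin n => x.1 = σ x.2)
      rw [himg, hcard1] at htot
      have hod : (Finset.univ.offDiag : Finset (Fin n × Fin n)).card = n * n - n := by
        rw [Finset.offDiag_card, Finset.card_univ, Fintype.card_fin]
      rw [hod] at htot
      have hnn : n ≤ n * n := Nat.le_mul_of_pos_left n hn
      have : n ^ 2 = n * n := sq n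
      omega
    rw [hcard2]
    ring
  rw [hprod]
  ring
end

section
/- Let σ ∈ S_n with σ(i) ≠ i for all i, and a, c_1, ..., c_n > 0. The map Θ(X) = diag(a x_{11} + c_1 x_{σ(1)σ(1)}, ..., a x_{nn} + c_n x_{σ(n)σ(n)}) - X on M_n is completely positive if and only if a ≥ n. -/
open Finset Matrix
open scoped Kronecker ComplexOrder

/-- A linear map on `M_n` is completely positive iff its Choi matrix is positive
semidefinite (Choi's theorem); we take this as the definition. -/
def IsCompletelyPositive (n : ℕ) (φ : Matrix (Fin n) (Fin n) ℂ → Matrix (Fin n) (Fin n) ℂ) :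
    Prop :=
  (∑ i, ∑ j, (Matrix.single i j (1 : ℂ)) ⊗ₖ
    φ (Matrix.single i j (1 : ℂ))).PosSemidef

/-! The Choi matrix of `Θ` is `D - ω ω*`, where `ω = ∑ₖ eₖ ⊗ eₖ` and `D` is diagonal with entry
`a [i = k] + c_k [i = σ k]` at `(i, k)`. Such a matrix is positive semidefinite iff
`|⟨ω, x⟩|² ≤ ∑ D_p |x_p|²` for all `x`. Testing `x = ω` gives `n² ≤ n a`, because `σ` has no fixed
points. Conversely `|∑ₖ x_kk|² ≤ n ∑ₖ |x_kk|²` by Cauchy–Schwarz, and `a ∑ₖ |x_kk|²` is at most the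
right-hand side since `c ≥ 0`. -/

section DiagonalSubRankOne

variable {ι : Type*} [Fintype ι] [DecidableEq ι]

theorem dotProduct_diagonal_sub_vecMulVec_mulVec (d : ι → ℝ) (v x : ι → ℂ) :
    star x ⬝ᵥ (diagonal (fun i => (d i : ℂ)) - vecMulVec v (star v)) *ᵥ x =
      ((∑ i, d i * Complex.normSq (x i) - Complex.normSq (star v ⬝ᵥ x) : ℝ) : ℂ) := by
  have hdiag : star x ⬝ᵥ diagonal (fun i => (d i : ℂ)) *ᵥ x = ∑ i, d i * Complex.normSq (x i) := by
    simp only [dotProduct, mulVec_diagonal, Pi.star_apply, Complex.star_def]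
    push_cast
    exact sum_congr rfl fun i _ => by rw [Complex.normSq_eq_conj_mul_self]; ring
  have hrank : star x ⬝ᵥ vecMulVec v (star v) *ᵥ x = Complex.normSq (star v ⬝ᵥ x) := by
    rw [vecMulVec_mulVec, Complex.normSq_eq_conj_mul_self, mul_comm]
    simp [dotProduct_comm (star x), star_dotProduct]
  rw [sub_mulVec, dotProduct_sub, hdiag, hrank]
  push_cast
  rfl

theorem posSemidef_diagonal_sub_vecMulVec_iff (d : ι → ℝ) (v : ι → ℂ) :
    (diagonal (fun i => (d i : ℂ)) - vecMulVec v (star v)).PosSemidef ↔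
      ∀ x, Complex.normSq (star v ⬝ᵥ x) ≤ ∑ i, d i * Complex.normSq (x i) := by
  have hherm : (diagonal (fun i => (d i : ℂ)) - vecMulVec v (star v)).IsHermitian :=
    (isHermitian_diagonal_of_self_adjoint _ (funext fun i => Complex.conj_ofReal (d i))).sub
      (posSemidef_vecMulVec_self_star v).isHermitian
  simp only [posSemidef_iff_dotProduct_mulVec, hherm, true_and,
    dotProduct_diagonal_sub_vecMulVec_mulVec, Complex.zero_le_real, sub_nonneg]

end DiagonalSubRankOne

theorem Fintype.sum_ite_fst_eq_snd {ι M : Type*} [Fintype ι] [DecidableEq ι] [AddCommMonoid M]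
    (f : ι × ι → M) : ∑ p, (if p.1 = p.2 then f p else 0) = ∑ k, f (k, k) := by
  rw [← sum_filter, ← sum_diag]
  congr 1
  ext p
  simp

theorem Complex.normSq_sum_le_card_mul {ι : Type*} (s : Finset ι) (f : ι → ℂ) :
    Complex.normSq (∑ i ∈ s, f i) ≤ #s * ∑ i ∈ s, Complex.normSq (f i) := by
  simp only [← Complex.sq_norm]
  calc ‖∑ i ∈ s, f i‖ ^ 2 ≤ (∑ i ∈ s, ‖f i‖) ^ 2 := by gcongr; exact norm_sum_le _ _
    _ ≤ #s * ∑ i ∈ s, ‖f i‖ ^ 2 := sq_sum_le_card_mul_sum_sq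

theorem sum_single_kronecker_apply {ι R : Type*} [Fintype ι] [DecidableEq ι] [Semiring R]
    (φ : Matrix ι ι R → Matrix ι ι R) (i j k l : ι) :
    (∑ i', ∑ j', single i' j' (1 : R) ⊗ₖ φ (single i' j' 1)) (i, k) (j, l) =
      φ (single i j 1) k l := by
  simp [Matrix.sum_apply, kroneckerMap_apply, single_apply, ite_and]

def entangledVec (ι : Type*) [DecidableEq ι] : ι × ι → ℂ := fun p => if p.1 = p.2 then 1 else 0

section Entangled

variable {ι : Type*} [Fintype ι] [DecidableEq ι]

theorem star_entangledVec_dotProduct (x : ι × ι → ℂ) :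
    star (entangledVec ι) ⬝ᵥ x = ∑ k, x (k, k) := by
  simp [entangledVec, dotProduct, apply_ite star, ite_mul, Fintype.sum_ite_fst_eq_snd (x ·)]

theorem sum_mul_normSq_entangledVec (f : ι × ι → ℝ) :
    ∑ p, f p * Complex.normSq (entangledVec ι p) = ∑ k, f (k, k) := by
  simp [entangledVec, apply_ite Complex.normSq, mul_ite, Fintype.sum_ite_fst_eq_snd]

end Entangled

def choiDiag {n : ℕ} (σ : Equiv.Perm (Fin n)) (a : ℝ) (c : Fin n → ℝ) (p : Fin n × Fin n) : ℝ :=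
  (if p.1 = p.2 then a else 0) + (if p.1 = σ p.2 then c p.2 else 0)

theorem choi_thetaMap {n : ℕ} (σ : Equiv.Perm (Fin n)) (a : ℝ) (c : Fin n → ℝ) :
    ∑ i, ∑ j, single i j (1 : ℂ) ⊗ₖ ThetaMap n σ a c (single i j 1) =
      diagonal (fun p => (choiDiag σ a c p : ℂ)) -
        vecMulVec (entangledVec (Fin n)) (star (entangledVec (Fin n))) := by
  ext ⟨i, k⟩ ⟨j, l⟩
  rw [sum_single_kronecker_apply]
  simp [ThetaMap, choiDiag, entangledVec, diagonal_apply, vecMulVec_apply, single_apply, Prod.ext_iff,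
    apply_ite ((↑) : ℝ → ℂ)]
  grind

theorem isCompletelyPositive_thetaMap_iff {n : ℕ} (σ : Equiv.Perm (Fin n)) (a : ℝ)
    (c : Fin n → ℝ) :
    IsCompletelyPositive n (ThetaMap n σ a c) ↔
      ∀ x : Fin n × Fin n → ℂ,
        Complex.normSq (∑ k, x (k, k)) ≤ ∑ p, choiDiag σ a c p * Complex.normSq (x p) := by
  simp only [IsCompletelyPositive, choi_thetaMap, posSemidef_diagonal_sub_vecMulVec_iff,
    star_entangledVec_dotProduct]

theorem stmt11_general (n : ℕ) (hn : 0 < n) (σ : Equiv.Perm (Fin n)) (hσ : ∀ i, σ i ≠ i)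
    (a : ℝ) (c : Fin n → ℝ) (hc : ∀ i, 0 < c i) :
    IsCompletelyPositive n (ThetaMap n σ a c) ↔ (n : ℝ) ≤ a := by
  rw [isCompletelyPositive_thetaMap_iff]
  constructor
  · intro h
    have key : (n : ℝ) * n ≤ n * a := by
      have hω := h (entangledVec (Fin n))
      rw [sum_mul_normSq_entangledVec] at hω
      simpa [entangledVec, choiDiag, fun k => (hσ k).symm] using hω
    exact le_of_mul_le_mul_left key (by exact_mod_cast hn)
  · intro hna x
    calc Complex.normSq (∑ k, x (k, k)) ≤ n * ∑ k, Complex.normSq (x (k, k)) := by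
          simpa using Complex.normSq_sum_le_card_mul univ (fun k => x (k, k))
      _ ≤ a * ∑ k, Complex.normSq (x (k, k)) := by
          gcongr
          exact sum_nonneg fun k _ => Complex.normSq_nonneg _
      _ = ∑ p, (if p.1 = p.2 then a else 0) * Complex.normSq (x p) := by
          simp [ite_mul, Fintype.sum_ite_fst_eq_snd, mul_sum]
      _ ≤ ∑ p, choiDiag σ a c p * Complex.normSq (x p) := by
          refine sum_le_sum fun p _ => mul_le_mul_of_nonneg_right ?_ (Complex.normSq_nonneg _)
          exact le_add_of_nonneg_right (ite_nonneg (hc _).le le_rfl)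

theorem stmt11 (n : ℕ) (hn : 0 < n) (σ : Equiv.Perm (Fin n)) (hσ : ∀ i, σ i ≠ i)
    (a : ℝ) (c : Fin n → ℝ) (ha0 : 0 < a) (hc : ∀ i, 0 < c i) :
    IsCompletelyPositive n (ThetaMap n σ a c) ↔ (n : ℝ) ≤ a :=
  stmt11_general n hn σ hσ a c hc
end

section
/- Let n ≥ 2 and let i ≠ j in {1,...,n}. The matrix σ_{ij} = E_{ii}⊗E_{ii} + E_{jj}⊗E_{jj} + E_{ii}⊗E_{jj} + E_{jj}⊗E_{ii} - E_{ij}⊗E_{ij} - E_{ji}⊗E_{ji} ∈ M_n ⊗ M_n is separable, i.e., it is a finite sum of tensor products B ⊗ C with B, C positive semidefinite matrices in M_n. -/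
/-!
The 2 ⊗ 2 block `σ₀₁` is an average of product states: with `ω` running over the fourth roots of
unity, `σ₀₁ = ∑_ω (u_ω u_ωᴴ) ⊗ (v_ω v_ωᴴ)` for `u_ω = (1, ω)` and `v_ω = (1, -ω̄) / 2`, since the
cross terms carry the factors `ω`, `ω̄` or `ω²`, whose averages vanish. For general `i, j` the
matrix `σᵢⱼ` is the image of `σ₀₁` under congruence by `D ⊗ D`, where `D` sends `e₀ ↦ eᵢ` and
`e₁ ↦ eⱼ`, and such congruences preserve separability.
-/

open Finset Matrix
open scoped Kronecker ComplexOrder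

/-- The `n × n` matrix units. -/
def En (n : ℕ) (i j : Fin n) : Matrix (Fin n) (Fin n) ℂ := Matrix.single i j 1

namespace Matrix

section Separable

variable {R : Type*} [CommRing R] [PartialOrder R] [StarRing R]
  {m n m' n' : Type*} [Fintype m] [Fintype n]

def IsSeparable (M : Matrix (m × n) (m × n) R) : Prop :=
  ∃ (k : ℕ) (B : Fin k → Matrix m m R) (C : Fin k → Matrix n n R),
    (∀ t, (B t).PosSemidef) ∧ (∀ t, (C t).PosSemidef) ∧ M = ∑ t, B t ⊗ₖ C t

theorem IsSeparable.kronecker_mul_mul_conjTranspose [Fintype m'] [Fintype n']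
    {M : Matrix (m × n) (m × n) R} (hM : M.IsSeparable) (D : Matrix m' m R) (E : Matrix n' n R) :
    ((D ⊗ₖ E) * M * (D ⊗ₖ E)ᴴ).IsSeparable := by
  obtain ⟨k, B, C, hB, hC, rfl⟩ := hM
  refine ⟨k, fun t => D * B t * Dᴴ, fun t => E * C t * Eᴴ,
    fun t => (hB t).mul_mul_conjTranspose_same D, fun t => (hC t).mul_mul_conjTranspose_same E, ?_⟩
  simp only [Matrix.mul_sum, Matrix.sum_mul, conjTranspose_kronecker, ← mul_kronecker_mul]

end Separable

section Single

variable {α ι ι' κ : Type*} [Semiring α] [Fintype ι] [DecidableEq ι] [DecidableEq ι']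
  [DecidableEq κ]

theorem one_submatrix_mul_single (f : ι → κ) (a : ι) (b : ι') (c : α) :
    (1 : Matrix κ κ α).submatrix id f * single a b c = single (f a) b c := by
  ext k l
  simp [mul_apply, single_apply, one_apply, ite_and, eq_comm]
  split_ifs <;> rfl

theorem one_submatrix_mul_single_mul_conjTranspose [StarRing α] (f : ι → κ) (a b : ι) (c : α) :
    (1 : Matrix κ κ α).submatrix id f * single a b c * ((1 : Matrix κ κ α).submatrix id f)ᴴ =
      single (f a) (f b) c := by
  rw [one_submatrix_mul_single, ← conjTranspose_conjTranspose (single (f a) b c),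
    ← conjTranspose_mul, conjTranspose_single, one_submatrix_mul_single, conjTranspose_single,
    star_star]

end Single

end Matrix

section Sigma

variable {ι κ : Type*} [DecidableEq ι] [DecidableEq κ]

def sigmaMatrix (i j : ι) : Matrix (ι × ι) (ι × ι) ℂ :=
  single i i 1 ⊗ₖ single i i 1 + single j j 1 ⊗ₖ single j j 1 + single i i 1 ⊗ₖ single j j 1 +
    single j j 1 ⊗ₖ single i i 1 - single i j 1 ⊗ₖ single i j 1 - single j i 1 ⊗ₖ single j i 1

theorem kronecker_mul_sigmaMatrix_mul_conjTranspose [Fintype ι] (f : ι → κ) (i j : ι) :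
    let D := (1 : Matrix κ κ ℂ).submatrix id f
    (D ⊗ₖ D) * sigmaMatrix i j * (D ⊗ₖ D)ᴴ = sigmaMatrix (f i) (f j) := by
  simp only [sigmaMatrix, Matrix.mul_add, Matrix.add_mul, Matrix.mul_sub, Matrix.sub_mul,
    conjTranspose_kronecker, ← mul_kronecker_mul, one_submatrix_mul_single_mul_conjTranspose]

theorem sigmaMatrix_zero_one_eq_sum :
    sigmaMatrix (0 : Fin 2) 1 = ∑ t : Fin 4,
      vecMulVec ![1, Complex.I ^ (t : ℕ)] (star ![1, Complex.I ^ (t : ℕ)]) ⊗ₖ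
        vecMulVec ![1 / 2, -star (Complex.I ^ (t : ℕ)) / 2]
          (star ![1 / 2, -star (Complex.I ^ (t : ℕ)) / 2]) := by
  ext ⟨a, b⟩ ⟨c, d⟩
  simp only [sigmaMatrix, Matrix.sum_apply, kroneckerMap_apply, vecMulVec_apply,
    Fin.sum_univ_four, Matrix.add_apply, Matrix.sub_apply, single_apply, Pi.star_apply]
  fin_cases a <;> fin_cases b <;> fin_cases c <;> fin_cases d <;>
    simp [pow_succ] <;> ring_nf <;> simp [Complex.ext_iff] <;> norm_num

theorem isSeparable_sigmaMatrix_zero_one : (sigmaMatrix (0 : Fin 2) 1).IsSeparable :=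
  ⟨4, _, _, fun _ => posSemidef_vecMulVec_self_star _, fun _ => posSemidef_vecMulVec_self_star _,
    sigmaMatrix_zero_one_eq_sum⟩

theorem isSeparable_sigmaMatrix [Fintype ι] (i j : ι) : (sigmaMatrix i j).IsSeparable := by
  have h := isSeparable_sigmaMatrix_zero_one.kronecker_mul_mul_conjTranspose
    ((1 : Matrix ι ι ℂ).submatrix id ![i, j]) ((1 : Matrix ι ι ℂ).submatrix id ![i, j])
  rwa [kronecker_mul_sigmaMatrix_mul_conjTranspose] at h

end Sigma

theorem stmt15_general (n : ℕ) (i j : Fin n) :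
    ∃ (k : ℕ) (B C : Fin k → Matrix (Fin n) (Fin n) ℂ),
      (∀ t, (B t).PosSemidef) ∧ (∀ t, (C t).PosSemidef) ∧
      En n i i ⊗ₖ En n i i + En n j j ⊗ₖ En n j j + En n i i ⊗ₖ En n j j +
          En n j j ⊗ₖ En n i i - En n i j ⊗ₖ En n i j - En n j i ⊗ₖ En n j i =
        ∑ t, B t ⊗ₖ C t :=
  isSeparable_sigmaMatrix i j

theorem stmt15 (n : ℕ) (hn : 2 ≤ n) (i j : Fin n) (hij : i ≠ j) :
    ∃ (k : ℕ) (B C : Fin k → Matrix (Fin n) (Fin n) ℂ),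
      (∀ t, (B t).PosSemidef) ∧ (∀ t, (C t).PosSemidef) ∧
      En n i i ⊗ₖ En n i i + En n j j ⊗ₖ En n j j + En n i i ⊗ₖ En n j j +
          En n j j ⊗ₖ En n i i - En n i j ⊗ₖ En n i j - En n j i ⊗ₖ En n j i =
        ∑ t, B t ⊗ₖ C t :=
  stmt15_general n i j
end

section
/- Let n ≥ 2 and let σ ∈ S_n have no fixed points, and set a = n - 1. Let Θ(X) = diag((n-1)x_{11} + c_1 x_{σ(1)σ(1)}, ..., (n-1)x_{nn} + c_n x_{σ(n)σ(n)}) - X with c_i > 0. Then the Choi matrix C_Θ = Σ_{i,j} E_{ij} ⊗ Θ(E_{ij}) has exactly one negative eigenvalue, equal to -1, and hence ‖C_Θ^-‖ = 1, where C_Θ = C_Θ^+ - C_Θ^- is the Jordan decomposition into positive and negative parts. -/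
open Finset Matrix
open scoped Kronecker ComplexOrder Matrix.Norms.L2Operator

/-!
With `ω = ∑ᵢ eᵢ ⊗ eᵢ` (`maxEntangled n`), the Choi matrix is `D - ω ω*` for a diagonal `D ≥ 0`.
Hence it is positive semidefinite on the hyperplane `ω⊥`, so it has at most one negative
eigenvalue; since `σ` has no fixed points, `ω` is an eigenvector with eigenvalue `a - n = -1`.
In a Jordan decomposition `C = C⁺ - C⁻`, every eigenvector of `C⁻` for an eigenvalue `μ ≠ 0` is
killed by `C⁺`, so `-μ` is an eigenvalue of `C`. Thus `C⁻` has spectrum in `{0, 1}`: it is a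
nonzero orthogonal projection, of norm `1`.
-/

theorem IsStarProjection.norm_eq_one {E : Type*} [NonUnitalNormedRing E] [StarRing E]
    [CStarRing E] {e : E} (he : IsStarProjection e) (he0 : e ≠ 0) : ‖e‖ = 1 := by
  have h : ‖e‖ * ‖e‖ = ‖e‖ := by
    rw [← CStarRing.norm_star_mul_self, he.isSelfAdjoint.star_eq, he.isIdempotentElem.eq]
  exact (mul_eq_right₀ (norm_ne_zero_iff.2 he0)).1 h

namespace Matrix

variable {m 𝕜 : Type*} [Fintype m] [DecidableEq m] [RCLike 𝕜]

theorem mem_spectrum_of_mulVec_eq_smul {K : Type*} [Field K] {A : Matrix m m K} {w : m → K}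
    {t : K} (hw : w ≠ 0) (h : A *ᵥ w = t • w) : t ∈ spectrum K A := by
  rw [← spectrum_toLin']
  exact Module.End.hasEigenvalue_iff_mem_spectrum.1 <|
    Module.End.hasEigenvalue_of_hasEigenvector ⟨Module.End.mem_eigenspace_iff.2 h, hw⟩

theorem mem_spectrum_real_of_mulVec_eq_smul {A : Matrix m m 𝕜} {w : m → 𝕜} {t : ℝ}
    (hw : w ≠ 0) (h : A *ᵥ w = t • w) : t ∈ spectrum ℝ A :=
  (spectrum.algebraMap_mem_iff 𝕜).1 <|
    mem_spectrum_of_mulVec_eq_smul hw (by rwa [algebraMap_smul])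

theorem PosSemidef.nonneg_of_mem_spectrum {A : Matrix m m 𝕜} (hA : A.PosSemidef) {t : ℝ}
    (ht : t ∈ spectrum ℝ A) : 0 ≤ t := by
  obtain ⟨p, rfl⟩ := hA.1.spectrum_real_eq_range_eigenvalues ▸ ht
  exact hA.eigenvalues_nonneg p

namespace IsHermitian

variable {A : Matrix m m 𝕜}

theorem star_eigenvectorBasis_dotProduct (hA : A.IsHermitian) (p q : m) :
    star ⇑(hA.eigenvectorBasis p) ⬝ᵥ ⇑(hA.eigenvectorBasis q) = if p = q then 1 else 0 := by
  rw [dotProduct_comm, ← EuclideanSpace.inner_eq_star_dotProduct]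
  exact orthonormal_iff_ite.1 hA.eigenvectorBasis.orthonormal p q

theorem star_eigenvectorBasis_dotProduct_mulVec (hA : A.IsHermitian) (p q : m) :
    star ⇑(hA.eigenvectorBasis p) ⬝ᵥ (A *ᵥ ⇑(hA.eigenvectorBasis q)) =
      if p = q then (hA.eigenvalues q : 𝕜) else 0 := by
  rw [hA.mulVec_eigenvectorBasis, dotProduct_smul, star_eigenvectorBasis_dotProduct]
  split_ifs <;> simp [RCLike.real_smul_eq_coe_mul]

theorem subsingleton_eigenvalues_neg_of_posSemidef_add_vecMulVec (hA : A.IsHermitian)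
    (u : m → 𝕜) (hB : (A + vecMulVec u (star u)).PosSemidef) :
    {p | hA.eigenvalues p < 0}.Subsingleton := by
  have hform : ∀ x, star u ⬝ᵥ x = 0 → 0 ≤ star x ⬝ᵥ (A *ᵥ x) := fun x hx => by
    simpa [add_mulVec, vecMulVec_mulVec, hx] using hB.dotProduct_mulVec_nonneg x
  intro p (hp : hA.eigenvalues p < 0) q (hq : hA.eigenvalues q < 0)
  by_contra hpq
  set e := fun r => ⇑(hA.eigenvectorBasis r)
  set a := star u ⬝ᵥ e q
  set b := star u ⬝ᵥ e p
  -- a vector of `u⊥` in the span of two eigenvectors with negative eigenvalues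
  have hx : star u ⬝ᵥ (a • e p - b • e q) = 0 := by
    simp only [dotProduct_sub, dotProduct_smul, smul_eq_mul, a, b, e]; ring
  have hquad : star (a • e p - b • e q) ⬝ᵥ (A *ᵥ (a • e p - b • e q)) =
      ((‖a‖ ^ 2 * hA.eigenvalues p + ‖b‖ ^ 2 * hA.eigenvalues q : ℝ) : 𝕜) := by
    simp only [mulVec_sub, mulVec_smul, star_sub, star_smul, sub_dotProduct, dotProduct_sub,
      smul_dotProduct, dotProduct_smul, e, star_eigenvectorBasis_dotProduct_mulVec, if_pos,
      if_neg hpq, if_neg (Ne.symm hpq), smul_eq_mul]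
    push_cast
    rw [← RCLike.conj_mul, ← RCLike.conj_mul]
    simp only [RCLike.star_def, mul_zero, sub_zero, zero_sub, mul_neg, sub_neg_eq_add]
    ring
  have h1 := hform _ hx
  rw [hquad, RCLike.ofReal_nonneg] at h1
  have hb : b = 0 := by
    by_contra hb
    nlinarith [mul_nonpos_of_nonneg_of_nonpos (sq_nonneg ‖a‖) hp.le,
      mul_pos (pow_pos (norm_pos_iff.2 hb) 2) (neg_pos.2 hq)]
  have h2 := hform (e p) hb
  rw [star_eigenvectorBasis_dotProduct_mulVec, if_pos rfl, RCLike.ofReal_nonneg] at h2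
  exact absurd hp (not_lt.2 h2)

end IsHermitian

theorem neg_mem_spectrum_sub_of_mul_eq_zero {P N : Matrix m m 𝕜} (hN : N.IsHermitian)
    (hPN : P * N = 0) {μ : ℝ} (hμ : μ ∈ spectrum ℝ N) (hμ0 : μ ≠ 0) :
    -μ ∈ spectrum ℝ (P - N) := by
  obtain ⟨q, rfl⟩ := hN.spectrum_real_eq_range_eigenvalues ▸ hμ
  set w := ⇑(hN.eigenvectorBasis q)
  have hNw : N *ᵥ w = hN.eigenvalues q • w := hN.mulVec_eigenvectorBasis q
  have hPw : P *ᵥ w = 0 := by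
    have h : P *ᵥ (N *ᵥ w) = 0 := by rw [mulVec_mulVec, hPN, zero_mulVec]
    rwa [hNw, mulVec_smul, smul_eq_zero, or_iff_right hμ0] at h
  refine mem_spectrum_real_of_mulVec_eq_smul (w := w) ?_ ?_
  · simpa [w] using hN.eigenvectorBasis.orthonormal.ne_zero q
  · rw [sub_mulVec, hPw, hNw, zero_sub, neg_smul]

theorem isStarProjection_of_mul_eq_zero {P N : Matrix m m 𝕜} (hN : N.PosSemidef)
    (hPN : P * N = 0) (hneg : ∀ t ∈ spectrum ℝ (P - N), t < 0 → t = -1) :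
    IsStarProjection N := by
  refine isStarProjection_iff_spectrum_subset_and_isSelfAdjoint.2 ⟨fun μ hμ => ?_, hN.1⟩
  rcases eq_or_ne μ 0 with rfl | hμ0
  · exact Set.mem_insert _ _
  · have hμpos : 0 < μ := (hN.nonneg_of_mem_spectrum hμ).lt_of_ne' hμ0
    have := hneg _ (neg_mem_spectrum_sub_of_mul_eq_zero hN.1 hPN hμ hμ0) (by linarith)
    simp [show μ = 1 by linarith]

end Matrix

def maxEntangled (n : ℕ) : Fin n × Fin n → ℂ := fun p => if p.1 = p.2 then 1 else 0

theorem star_maxEntangled (n : ℕ) : star (maxEntangled n) = maxEntangled n := by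
  ext p; simp [maxEntangled, apply_ite]

theorem star_maxEntangled_dotProduct (n : ℕ) :
    star (maxEntangled n) ⬝ᵥ maxEntangled n = n := by
  simp [dotProduct, maxEntangled, Fintype.sum_prod_type]

theorem choiMatrix_apply (n : ℕ) (σ : Equiv.Perm (Fin n)) (a : ℝ) (c : Fin n → ℝ)
    (i k j l : Fin n) :
    ChoiMatrix n σ a c (i, k) (j, l) = ThetaMap n σ a c (single i j 1) k l := by
  simp [ChoiMatrix, Matrix.sum_apply, kroneckerMap_apply, single_apply, ite_and]

theorem choiMatrix_add_vecMulVec (n : ℕ) (σ : Equiv.Perm (Fin n)) (a : ℝ) (c : Fin n → ℝ) :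
    ChoiMatrix n σ a c + vecMulVec (maxEntangled n) (star (maxEntangled n)) =
      diagonal fun p =>
        (if p.1 = p.2 then (a : ℂ) else 0) + if p.1 = σ p.2 then (c p.2 : ℂ) else 0 := by
  ext ⟨i, k⟩ ⟨j, l⟩
  rw [Matrix.add_apply, choiMatrix_apply, star_maxEntangled]
  simp only [ThetaMap, maxEntangled, Matrix.sub_apply, diagonal_apply, vecMulVec_apply,
    single_apply, Prod.mk.injEq]
  split_ifs <;> grind

theorem posSemidef_choiMatrix_add_vecMulVec (n : ℕ) (σ : Equiv.Perm (Fin n)) {a : ℝ}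
    (ha : 0 ≤ a) {c : Fin n → ℝ} (hc : ∀ i, 0 ≤ c i) :
    (ChoiMatrix n σ a c + vecMulVec (maxEntangled n) (star (maxEntangled n))).PosSemidef := by
  rw [choiMatrix_add_vecMulVec]
  refine PosSemidef.diagonal fun p => add_nonneg ?_ ?_ <;> split_ifs <;>
    simp [Complex.zero_le_real, ha, hc]

theorem choiMatrix_mulVec_maxEntangled (n : ℕ) {σ : Equiv.Perm (Fin n)} (hσ : ∀ i, σ i ≠ i)
    (a : ℝ) (c : Fin n → ℝ) :
    ChoiMatrix n σ a c *ᵥ maxEntangled n = (a - n : ℝ) • maxEntangled n := by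
  have h := congrArg (· *ᵥ maxEntangled n) (choiMatrix_add_vecMulVec n σ a c)
  simp only [add_mulVec, vecMulVec_mulVec, star_maxEntangled_dotProduct] at h
  rw [eq_sub_of_add_eq h]
  ext ⟨i, k⟩
  by_cases hik : i = k
  · subst hik; simp [maxEntangled, mulVec_diagonal, (hσ i).symm]
  · simp [maxEntangled, mulVec_diagonal, hik]

theorem stmt16 (n : ℕ) (hn : 2 ≤ n) (σ : Equiv.Perm (Fin n)) (hσ : ∀ i, σ i ≠ i)
    (c : Fin n → ℝ) (hc : ∀ i, 0 < c i)
    (hC : (ChoiMatrix n σ ((n : ℝ) - 1) c).IsHermitian) :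
    (∃! p : Fin n × Fin n, hC.eigenvalues p < 0) ∧
    (∀ p : Fin n × Fin n, hC.eigenvalues p < 0 → hC.eigenvalues p = -1) ∧
    (∀ Cp Cm : Matrix (Fin n × Fin n) (Fin n × Fin n) ℂ,
      Cp.PosSemidef → Cm.PosSemidef → ChoiMatrix n σ ((n : ℝ) - 1) c = Cp - Cm →
      Cp * Cm = 0 → ‖Cm‖ = 1) := by
  have ha : (0 : ℝ) ≤ n - 1 := by linarith [show (2 : ℝ) ≤ n by exact_mod_cast hn]
  have hneg := hC.subsingleton_eigenvalues_neg_of_posSemidef_add_vecMulVec _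
    (posSemidef_choiMatrix_add_vecMulVec n σ ha fun i => (hc i).le)
  have hω : maxEntangled n ≠ 0 := fun h => by
    simpa [maxEntangled] using congrFun h (⟨0, by omega⟩, ⟨0, by omega⟩)
  have hmem : (-1 : ℝ) ∈ spectrum ℝ (ChoiMatrix n σ ((n : ℝ) - 1) c) :=
    mem_spectrum_real_of_mulVec_eq_smul hω <| by
      rw [choiMatrix_mulVec_maxEntangled n hσ]; norm_num
  obtain ⟨p₀, hp₀⟩ : (-1 : ℝ) ∈ Set.range hC.eigenvalues :=
    hC.spectrum_real_eq_range_eigenvalues ▸ hmem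
  have hp₀neg : hC.eigenvalues p₀ < 0 := by rw [hp₀]; norm_num
  have heq : ∀ p, hC.eigenvalues p < 0 → hC.eigenvalues p = -1 := fun p hp =>
    hneg hp hp₀neg ▸ hp₀
  refine ⟨⟨p₀, hp₀neg, fun q hq => hneg hq hp₀neg⟩, heq, fun Cp Cm hCp hCm hsum hmul => ?_⟩
  refine (isStarProjection_of_mul_eq_zero hCm hmul ?_).norm_eq_one fun h0 => ?_
  · rw [← hsum, hC.spectrum_real_eq_range_eigenvalues]
    rintro _ ⟨p, rfl⟩ hp
    exact heq p hp
  · rw [hsum, h0, sub_zero] at hmem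
    linarith [hCp.nonneg_of_mem_spectrum hmem]
end

section
/- Let n ≥ 3, σ ∈ S_n with all cycles of length ≥ 3, and 0 < c ≤ n / L where L is the maximal cycle length of σ. Let W ∈ M_n ⊗ M_n be W = (1/n) Σ_{i,j} E_{ij} ⊗ (T∘Θ)(E_{ij}), where Θ(X) = diag((n-c)x_{11} + c·x_{σ(1)σ(1)}, ..., (n-c)x_{nn} + c·x_{σ(n)σ(n)}) - X and T is the transpose. Then the set {ζ ∈ C^n ⊗ C^n : ζ = ξ⊗η product vector with ⟨Wζ, ζ⟩ = 0} spans C^n ⊗ C^n. -/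
/-!
The quadratic form of `W` on a product vector `ξ ⊗ η` is
`n⁻¹ ((n - c) Σ |ξ_a η_a|² + c Σ |ξ_{σ a} η_a|² - |⟨ξ, η⟩|²)`.
It vanishes on `ξ ⊗ ξ` whenever all `|ξ_a| = 1`, and on `e_i ⊗ e_j` whenever `i ≠ j` and
`σ j ≠ i`. Averaging `ξ ⊗ ξ` over phases `ξ_a ∈ {±1, ±i}` produces every `e_a ⊗ e_a` and every
`e_i ⊗ e_j + e_j ⊗ e_i`; since `σ` has no 2-cycles, one of `e_i ⊗ e_j`, `e_j ⊗ e_i` is in the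
family for each `i ≠ j`, so the product basis lies in the span.
-/

open Finset Matrix
open scoped Kronecker

/-- The map `Θ^{(n,σ)}[n-c; c,…,c]` on `n × n` complex matrices. -/
def ThetaC (n : ℕ) (σ : Equiv.Perm (Fin n)) (c : ℝ)
    (X : Matrix (Fin n) (Fin n) ℂ) : Matrix (Fin n) (Fin n) ℂ :=
  Matrix.diagonal (fun i => (((n : ℝ) - c : ℝ) : ℂ) * X i i + (c : ℂ) * X (σ i) (σ i)) - X

/-- The entanglement witness `W = (1/n) Σ_{i,j} E_{ij} ⊗ (T ∘ Θ)(E_{ij})`. -/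
noncomputable def Wwitness (n : ℕ) (σ : Equiv.Perm (Fin n)) (c : ℝ) :
    Matrix (Fin n × Fin n) (Fin n × Fin n) ℂ :=
  ((n : ℂ))⁻¹ • ∑ i, ∑ j, (Matrix.single i j (1 : ℂ)) ⊗ₖ
    (ThetaC n σ c (Matrix.single i j (1 : ℂ)))ᵀ

def tensorVec {ι κ R : Type*} [Mul R] (ξ : ι → R) (η : κ → R) : ι × κ → R :=
  fun p => ξ p.1 * η p.2

section Spanning

open Submodule Complex

variable {ι : Type*}

lemma tensorVec_add_add (x y : ι → ℂ) :
    tensorVec (x + y) (x + y) =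
      tensorVec x x + tensorVec x y + tensorVec y x + tensorVec y y := by
  ext p
  simp only [tensorVec, Pi.add_apply]
  ring

variable [DecidableEq ι]

lemma tensorVec_single_single (i j : ι) :
    tensorVec (Pi.single i (1 : ℂ)) (Pi.single j 1) = Pi.single (i, j) 1 := by
  ext ⟨x, y⟩
  by_cases hx : x = i <;> by_cases hy : y = j <;> simp [tensorVec, hx, hy]

def phaseOn (s : Finset ι) (u : ℂ) : ι → ℂ := fun x => if x ∈ s then u else 1

lemma phaseOn_unimodular (s : Finset ι) {u : ℂ} (hu : star u * u = 1) (x : ι) :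
    star (phaseOn s u x) * phaseOn s u x = 1 := by
  unfold phaseOn
  split_ifs
  · exact hu
  · simp

/-- Entry `(x, y)` of `phaseOn s u ⊗ phaseOn s u` is `u ^ m` with `m = [x ∈ s] + [y ∈ s]`;
the weights `u²` average over the fourth roots of unity to the indicator of `m = 2`. -/
lemma tensorVec_indicator_eq_phase_average (s : Finset ι) :
    tensorVec (fun x => if x ∈ s then (1 : ℂ) else 0) (fun x => if x ∈ s then 1 else 0) =
      (4 : ℂ)⁻¹ • (tensorVec (phaseOn s 1) (phaseOn s 1) - tensorVec (phaseOn s I) (phaseOn s I)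
        + tensorVec (phaseOn s (-1)) (phaseOn s (-1))
        - tensorVec (phaseOn s (-I)) (phaseOn s (-I))) := by
  ext ⟨x, y⟩
  by_cases hx : x ∈ s <;> by_cases hy : y ∈ s <;>
    simp [tensorVec, phaseOn, hx, hy] <;> ring_nf

lemma tensorVec_indicator_mem_span {S : Set (ι × ι → ℂ)}
    (hphase : ∀ ξ : ι → ℂ, (∀ a, star (ξ a) * ξ a = 1) → tensorVec ξ ξ ∈ S) (s : Finset ι) :
    tensorVec (fun x => if x ∈ s then (1 : ℂ) else 0) (fun x => if x ∈ s then 1 else 0) ∈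
      span ℂ S := by
  have hmem : ∀ u : ℂ, star u * u = 1 → tensorVec (phaseOn s u) (phaseOn s u) ∈ span ℂ S :=
    fun u hu => subset_span (hphase _ (phaseOn_unimodular s hu))
  rw [tensorVec_indicator_eq_phase_average]
  exact smul_mem _ _ <| sub_mem (add_mem (sub_mem (hmem 1 (by simp)) (hmem I (by simp)))
    (hmem (-1) (by simp))) (hmem (-I) (by simp))

variable [Fintype ι]

theorem span_eq_top_of_unimodular_of_single (S : Set (ι × ι → ℂ))
    (hphase : ∀ ξ : ι → ℂ, (∀ a, star (ξ a) * ξ a = 1) → tensorVec ξ ξ ∈ S)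
    (hsingle : ∀ i j, i ≠ j → Pi.single (i, j) 1 ∈ S ∨ Pi.single (j, i) 1 ∈ S) :
    span ℂ S = ⊤ := by
  have hdiag (a : ι) : Pi.single (a, a) (1 : ℂ) ∈ span ℂ S := by
    have h := tensorVec_indicator_mem_span hphase {a}
    simp only [Finset.mem_singleton, ← Pi.single_apply] at h
    rwa [tensorVec_single_single] at h
  have hsymm {i j : ι} (hij : i ≠ j) :
      Pi.single (i, j) (1 : ℂ) + Pi.single (j, i) 1 ∈ span ℂ S := by
    have h := tensorVec_indicator_mem_span hphase {i, j}
    have hχ : (fun x => if x ∈ ({i, j} : Finset ι) then (1 : ℂ) else 0) =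
        Pi.single i 1 + Pi.single j 1 := by
      ext x
      by_cases hx : x = i <;> by_cases hy : x = j <;> simp_all
    rw [hχ, tensorVec_add_add, tensorVec_single_single, tensorVec_single_single,
      tensorVec_single_single, tensorVec_single_single] at h
    convert sub_mem (sub_mem h (hdiag i)) (hdiag j) using 1
    abel
  have hall : ∀ p : ι × ι, Pi.single p (1 : ℂ) ∈ span ℂ S := by
    rintro ⟨i, j⟩
    by_cases hij : i = j
    · exact hij ▸ hdiag i
    rcases hsingle i j hij with h | h
    · exact subset_span h
    · simpa using sub_mem (hsymm hij) (subset_span h)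
  rw [eq_top_iff, ← (Pi.basisFun ℂ (ι × ι)).span_eq, span_le]
  rintro _ ⟨p, rfl⟩
  simpa using hall p

end Spanning

section Witness

variable {n : ℕ} (σ : Equiv.Perm (Fin n)) (c : ℝ)

lemma Wwitness_apply (a b a' b' : Fin n) :
    Wwitness n σ c (a, b) (a', b') = (n : ℂ)⁻¹ *
      ((if b' = b ∧ a = b' ∧ a' = b' then (((n : ℝ) - c : ℝ) : ℂ) else 0)
        + (if b' = b ∧ a = σ b' ∧ a' = σ b' then (c : ℂ) else 0)
        - (if a = b' ∧ a' = b then 1 else 0)) := by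
  unfold Wwitness ThetaC
  simp only [Matrix.smul_apply, Matrix.sum_apply, Matrix.kroneckerMap_apply,
    Matrix.transpose_apply, Matrix.sub_apply, Matrix.diagonal_apply, Matrix.single,
    Matrix.of_apply, smul_eq_mul]
  rw [Finset.sum_eq_single a, Finset.sum_eq_single a']
  · by_cases h : b' = b
    · subst h
      simp [ite_and, mul_ite]
    · simp [h]
  · intro j _ hj
    by_cases h : b' = b <;> simp [h, hj]
  · simp
  · intro i _ hi
    exact Finset.sum_eq_zero fun j _ => by simp [hi]
  · simp

lemma Wwitness_mulVec_tensorVec (ξ η : Fin n → ℂ) (a b : Fin n) :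
    (Wwitness n σ c).mulVec (tensorVec ξ η) (a, b) =
      (n : ℂ)⁻¹ * ((if a = b then (((n : ℝ) - c : ℝ) : ℂ) * (ξ b * η b) else 0)
        + (if a = σ b then (c : ℂ) * (ξ (σ b) * η b) else 0)
        - ξ b * η a) := by
  simp only [Matrix.mulVec, dotProduct, Fintype.sum_prod_type, Wwitness_apply, tensorVec]
  simp only [ite_and, mul_ite, ite_mul, zero_mul, mul_zero, sub_mul, add_mul,
    Finset.sum_sub_distrib, Finset.sum_add_distrib, Finset.sum_ite_eq,
    Finset.sum_ite_eq', Finset.mem_univ, if_true, mul_sub, mul_add]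
  by_cases h1 : a = b <;> by_cases h2 : a = σ b <;> simp [h1, h2] <;> ring_nf

lemma star_tensorVec_dotProduct_Wwitness (ξ η : Fin n → ℂ) :
    star (tensorVec ξ η) ⬝ᵥ (Wwitness n σ c).mulVec (tensorVec ξ η) =
    (n : ℂ)⁻¹ * ((((n : ℝ) - c : ℝ) : ℂ) * ∑ a, star (ξ a) * ξ a * star (η a) * η a
      + (c : ℂ) * ∑ a, star (ξ (σ a)) * ξ (σ a) * star (η a) * η a
      - (∑ a, star (ξ a) * η a) * (∑ a, ξ a * star (η a))) := by
  simp only [dotProduct, Fintype.sum_prod_type, Pi.star_apply, Wwitness_mulVec_tensorVec,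
    tensorVec, mul_sub, mul_add, mul_ite, mul_zero, Finset.sum_sub_distrib,
    Finset.sum_add_distrib, Finset.sum_ite_eq, Finset.mem_univ, if_true, star_mul']
  rw [Finset.sum_comm (f := fun x y => if x = σ y then _ else _)]
  simp only [Finset.sum_ite_eq', Finset.mem_univ, if_true]
  rw [Finset.sum_mul_sum]
  simp only [Finset.mul_sum]
  congr 1
  congr 1
  · exact Finset.sum_congr rfl fun i _ => by ring
  · exact Finset.sum_congr rfl fun i _ => by ring
  · exact Finset.sum_congr rfl fun i _ => Finset.sum_congr rfl fun j _ => by ring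

lemma star_tensorVec_dotProduct_Wwitness_single {i j : Fin n} (hij : i ≠ j) (hσ : σ j ≠ i) :
    star (tensorVec (Pi.single i 1) (Pi.single j 1)) ⬝ᵥ
      (Wwitness n σ c).mulVec (tensorVec (Pi.single i 1) (Pi.single j 1)) = 0 := by
  rw [star_tensorVec_dotProduct_Wwitness]
  simp [Pi.single_apply, hij.symm, hσ]

lemma star_tensorVec_dotProduct_Wwitness_of_unimodular {ξ : Fin n → ℂ}
    (hξ : ∀ a, star (ξ a) * ξ a = 1) :
    star (tensorVec ξ ξ) ⬝ᵥ (Wwitness n σ c).mulVec (tensorVec ξ ξ) = 0 := by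
  have hξ' (a : Fin n) : ξ a * star (ξ a) = 1 := mul_comm (ξ a) _ ▸ hξ a
  simp only [star_tensorVec_dotProduct_Wwitness, mul_assoc, hξ, hξ', mul_one, Finset.sum_const,
    Finset.card_univ, Fintype.card_fin, nsmul_eq_mul]
  push_cast
  ring

end Witness

theorem stmt18_general (n : ℕ) (σ : Equiv.Perm (Fin n))
    (hσ : ∀ i, σ i ≠ i ∧ σ (σ i) ≠ i) (c : ℝ) :
    Submodule.span ℂ
        {ζ : Fin n × Fin n → ℂ |
          (∃ ξ η : Fin n → ℂ, ζ = fun p => ξ p.1 * η p.2) ∧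
          star ζ ⬝ᵥ (Wwitness n σ c).mulVec ζ = 0} = ⊤ := by
  refine span_eq_top_of_unimodular_of_single _
    (fun ξ hξ => ⟨⟨ξ, ξ, rfl⟩, star_tensorVec_dotProduct_Wwitness_of_unimodular σ c hξ⟩)
    fun i j hij => ?_
  simp only [← tensorVec_single_single]
  by_cases hji : σ j = i
  · have hij' : σ i ≠ j := hji ▸ (hσ j).2
    exact .inr ⟨⟨_, _, rfl⟩,
      star_tensorVec_dotProduct_Wwitness_single σ c (Ne.symm hij) hij'⟩
  · exact .inl ⟨⟨_, _, rfl⟩, star_tensorVec_dotProduct_Wwitness_single σ c hij hji⟩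

theorem stmt18 (n : ℕ) (hn : 3 ≤ n) (σ : Equiv.Perm (Fin n))
    (hσ : ∀ i, σ i ≠ i ∧ σ (σ i) ≠ i) (c : ℝ) (hc : 0 < c)
    (hcL : ∀ i : Fin n, c * ((σ.cycleOf i).support.card : ℝ) ≤ n) :
    Submodule.span ℂ
        {ζ : Fin n × Fin n → ℂ |
          (∃ ξ η : Fin n → ℂ, ζ = fun p => ξ p.1 * η p.2) ∧
          star ζ ⬝ᵥ (Wwitness n σ c).mulVec ζ = 0} = ⊤ :=
  stmt18_general n σ hσ c
end
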